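/- arXiv:2604.03054 — 8 statements merged into one kernel-verified Lean document; each statement's English description precedes it below -/
import Mathlib

section
/- The points A, A', L, X are collinear, where X is the intersection of the tangents to the circumcircle at B' and C'. Equivalently: if A', B', C' are the second intersections of lines AL, BL, CL with the circumcircle of triangle ABC, where L is the symmedian (Lemoine) point of ABC, then the line AA' passes through the pole of line B'C' with respect to the circumcircle. -/
open EuclideanGeometry RealInnerProductSpace

noncomputable section

abbrev Pt := EuclideanSpace ℝ (Fin 2)

/-- The Lemoine (symmedian) point of a triangle, with barycentric
coordinates `(a², b², c²)`. -/
noncomputable def lemoinePoint (A B C : Pt) : Pt :=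
  ((dist B C) ^ 2 / ((dist B C) ^ 2 + (dist C A) ^ 2 + (dist A B) ^ 2)) • A +
  ((dist C A) ^ 2 / ((dist B C) ^ 2 + (dist C A) ^ 2 + (dist A B) ^ 2)) • B +
  ((dist A B) ^ 2 / ((dist B C) ^ 2 + (dist C A) ^ 2 + (dist A B) ^ 2)) • C

/-- Two circles are tangent at `x`: both pass through `x` and their centers
are collinear with `x` (hence they share the tangent line at `x`). -/
def CircleTangentAt (s t : EuclideanGeometry.Sphere Pt) (x : Pt) : Prop :=
  x ∈ s ∧ x ∈ t ∧ Collinear ℝ ({s.center, t.center, x} : Set Pt)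

/-- The power of a point with respect to a circle. -/
noncomputable def circlePower (p : Pt) (s : EuclideanGeometry.Sphere Pt) : ℝ :=
  dist p s.center ^ 2 - s.radius ^ 2

lemma collinear_param {P Q R' : Pt} (h : Collinear ℝ ({P, Q, R'} : Set Pt))
    (hne : P ≠ Q) : ∃ t : ℝ, R' = P + t • (Q - P) := by
  obtain ⟨p, v, hv⟩ := (collinear_iff_exists_forall_eq_smul_vadd _).mp h
  obtain ⟨r1, h1⟩ := hv P (by simp)
  obtain ⟨r2, h2⟩ := hv Q (by simp)
  obtain ⟨r3, h3⟩ := hv R' (by simp)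
  have hQP : Q - P = (r2 - r1) • v := by
    rw [h1, h2]; simp [vadd_eq_add, sub_smul]
  have hne2 : r2 - r1 ≠ 0 := by
    intro h0
    apply hne
    rw [h0, zero_smul] at hQP
    exact (sub_eq_zero.mp hQP).symm
  refine ⟨(r3 - r1) / (r2 - r1), ?_⟩
  have hRP : R' - P = (r3 - r1) • v := by
    rw [h1, h3]; simp [vadd_eq_add, sub_smul]
  have h4 : R' - P = ((r3 - r1) / (r2 - r1)) • (Q - P) := by
    rw [hQP, hRP, smul_smul, div_mul_cancel₀]
    exact hne2
  have := sub_eq_iff_eq_add.mp h4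
  rw [this, add_comm]

lemma det_perp {u v w : Pt} (hd : u 0 * v 1 - u 1 * v 0 ≠ 0)
    (h1 : ⟪w, u⟫ = 0) (h2 : ⟪w, v⟫ = 0) : w = 0 := by
  simp only [PiLp.inner_apply, RCLike.inner_apply, conj_trivial, Fin.sum_univ_two] at h1 h2
  have e0 : w 0 * (u 0 * v 1 - u 1 * v 0) = 0 := by linear_combination v 1 * h1 - u 1 * h2
  have e1 : w 1 * (u 0 * v 1 - u 1 * v 0) = 0 := by linear_combination u 0 * h2 - v 0 * h1
  ext i
  fin_cases i
  · simpa using (mul_eq_zero.mp e0).resolve_right hd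
  · simpa using (mul_eq_zero.mp e1).resolve_right hd

set_option maxHeartbeats 1000000 in
lemma star_identity (a b c : Pt) (r2 X Y Z sb sc k l n : ℝ)
    (haa : ⟪a,a⟫ = r2) (hbb : ⟪b,b⟫ = r2) (hcc : ⟪c,c⟫ = r2)
    (hab : ⟪a,b⟫ = X) (hba : ⟪b,a⟫ = X) (hbc : ⟪b,c⟫ = Y) (hcb : ⟪c,b⟫ = Y)
    (hca : ⟪c,a⟫ = Z) (hac : ⟪a,c⟫ = Z)
    (hk : k = 2*r2-2*Y) (hl : l = 2*r2-2*Z) (hn : n = 2*r2-2*X)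
    (Ma Mb Mc : Pt)
    (hMa : Ma = k • a + l • b + n • c - (k+l+n) • a)
    (hMb : Mb = k • a + l • b + n • c - (k+l+n) • b)
    (hMc : Mc = k • a + l • b + n • c - (k+l+n) • c)
    (hDb : ⟪Mb,Mb⟫ ≠ 0) (hDc : ⟪Mc,Mc⟫ ≠ 0)
    (hsb : sb * ⟪Mb,Mb⟫ = -(2*⟪b,Mb⟫)) (hsc : sc * ⟪Mc,Mc⟫ = -(2*⟪c,Mc⟫)) :
    (r2 - ⟪a, b + sb•Mb⟫) * ⟪Ma, c + sc•Mc⟫ = (r2 - ⟪a, c + sc•Mc⟫) * ⟪Ma, b + sb•Mb⟫ := by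
  have e1 : ⟪Mb,Mb⟫ • (b + sb•Mb) = ⟪Mb,Mb⟫ • b - (2*⟪b,Mb⟫) • Mb := by
    rw [smul_add, smul_smul, mul_comm, hsb, neg_smul, ← sub_eq_add_neg]
  have e2 : ⟪Mc,Mc⟫ • (c + sc•Mc) = ⟪Mc,Mc⟫ • c - (2*⟪c,Mc⟫) • Mc := by
    rw [smul_add, smul_smul, mul_comm, hsc, neg_smul, ← sub_eq_add_neg]
  have key0 : (r2 * ⟪Mb,Mb⟫ - ⟪a, ⟪Mb,Mb⟫ • b - (2*⟪b,Mb⟫) • Mb⟫) *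
        ⟪Ma, ⟪Mc,Mc⟫ • c - (2*⟪c,Mc⟫) • Mc⟫ =
      (r2 * ⟪Mc,Mc⟫ - ⟪a, ⟪Mc,Mc⟫ • c - (2*⟪c,Mc⟫) • Mc⟫) *
        ⟪Ma, ⟪Mb,Mb⟫ • b - (2*⟪b,Mb⟫) • Mb⟫ := by
    subst hk hl hn
    simp only [hMa, hMb, hMc, inner_add_left, inner_add_right, inner_sub_left, inner_sub_right,
      real_inner_smul_left, real_inner_smul_right, haa, hbb, hcc, hab, hba, hbc, hcb, hca, hac]
    ring
  rw [← e1, ← e2] at key0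
  simp only [real_inner_smul_right] at key0
  apply mul_left_cancel₀ (mul_ne_zero hDb hDc)
  linear_combination key0

set_option maxHeartbeats 4000000 in
theorem stmt0    (A B C : Pt) (hABC : AffineIndependent ℝ ![A, B, C])
    (ω : EuclideanGeometry.Sphere Pt) (hr : 0 < ω.radius)
    (hA : A ∈ ω) (hB : B ∈ ω) (hC : C ∈ ω)
    (L : Pt) (hL : L = lemoinePoint A B C)
    (A' : Pt) (hA'w : A' ∈ ω) (hA'ne : A' ≠ A) (hA'col : Collinear ℝ ({A, L, A'} : Set Pt))
    (B' : Pt) (hB'w : B' ∈ ω) (hB'ne : B' ≠ B) (hB'col : Collinear ℝ ({B, L, B'} : Set Pt))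
    (C' : Pt) (hC'w : C' ∈ ω) (hC'ne : C' ≠ C) (hC'col : Collinear ℝ ({C, L, C'} : Set Pt))
    (X : Pt) (hXB' : ⟪X - B', B' - ω.center⟫ = 0) (hXC' : ⟪X - C', C' - ω.center⟫ = 0) :
    Collinear ℝ ({A, A', L, X} : Set Pt) := by
  set o := ω.center with ho
  set r := ω.radius with hrr
  have hIP : ∀ P : Pt, P ∈ ω → ⟪P - o, P - o⟫ = r^2 := by
    intro P hP
    rw [real_inner_self_eq_norm_sq, ← dist_eq_norm, mem_sphere.mp hP]
  have haa := hIP A hA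
  have hbb := hIP B hB
  have hcc := hIP C hC
  have hAB : A ≠ B := by
    intro h; exact absurd (hABC.injective (by simpa using h : ![A,B,C] 0 = ![A,B,C] 1)) (by decide)
  have hBC : B ≠ C := by
    intro h; exact absurd (hABC.injective (by simpa using h : ![A,B,C] 1 = ![A,B,C] 2)) (by decide)
  have hCA : C ≠ A := by
    intro h; exact absurd (hABC.injective (by simpa using h : ![A,B,C] 2 = ![A,B,C] 0)) (by decide)
  set kk := dist B C ^ 2 with hkk
  set ll := dist C A ^ 2 with hll
  set nn := dist A B ^ 2 with hnn
  have hk : kk = 2*r^2 - 2*⟪B-o,C-o⟫ := by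
    rw [hkk, dist_eq_norm, ← sub_sub_sub_cancel_right B C o, norm_sub_sq_real,
      ← real_inner_self_eq_norm_sq, ← real_inner_self_eq_norm_sq, hbb, hcc]
    ring
  have hl : ll = 2*r^2 - 2*⟪C-o,A-o⟫ := by
    rw [hll, dist_eq_norm, ← sub_sub_sub_cancel_right C A o, norm_sub_sq_real,
      ← real_inner_self_eq_norm_sq, ← real_inner_self_eq_norm_sq, hcc, haa]
    ring
  have hn : nn = 2*r^2 - 2*⟪A-o,B-o⟫ := by
    rw [hnn, dist_eq_norm, ← sub_sub_sub_cancel_right A B o, norm_sub_sq_real,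
      ← real_inner_self_eq_norm_sq, ← real_inner_self_eq_norm_sq, haa, hbb]
    ring
  have hkpos : 0 < kk := pow_pos (dist_pos.mpr hBC) 2
  have hlpos : 0 < ll := pow_pos (dist_pos.mpr hCA) 2
  have hnpos : 0 < nn := pow_pos (dist_pos.mpr hAB) 2
  have hSpos : 0 < kk + ll + nn := by linarith
  have hSne : kk + ll + nn ≠ 0 := ne_of_gt hSpos
  have hL2 : L = (kk/(kk+ll+nn))•A + (ll/(kk+ll+nn))•B + (nn/(kk+ll+nn))•C := by
    rw [hL]
    unfold lemoinePoint
    rw [← hkk, ← hll, ← hnn]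
  have hLo : (kk+ll+nn) • (L - o) = kk•(A-o) + ll•(B-o) + nn•(C-o) := by
    rw [hL2]
    match_scalars <;> field_simp <;> ring
  have hY : ⟪B-o,C-o⟫ = r^2 - kk/2 := by linarith
  have hZ : ⟪C-o,A-o⟫ = r^2 - ll/2 := by linarith
  have hX : ⟪A-o,B-o⟫ = r^2 - nn/2 := by linarith
  have hLval : ⟪kk•(A-o) + ll•(B-o) + nn•(C-o), kk•(A-o) + ll•(B-o) + nn•(C-o)⟫
      < (kk+ll+nn)^2 * r^2 := by
    simp only [inner_add_left, inner_add_right, real_inner_smul_left, real_inner_smul_right,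
      haa, hbb, hcc, real_inner_comm (B-o) (C-o), real_inner_comm (C-o) (A-o),
      real_inner_comm (A-o) (B-o), hX, hY, hZ]
    nlinarith [mul_pos (mul_pos hkpos hlpos) hnpos]
  have hLnotin : ∀ P : Pt, P ∈ ω → L ≠ P := by
    intro P hP hLP
    have h1 : ⟪(kk+ll+nn)•(L-o), (kk+ll+nn)•(L-o)⟫ = (kk+ll+nn)^2 * r^2 := by
      rw [real_inner_smul_left, real_inner_smul_right, hLP, hIP P hP]; ring
    rw [hLo] at h1
    linarith
  -- the scaled cevian direction vectors
  set Ma := kk•(A-o) + ll•(B-o) + nn•(C-o) - (kk+ll+nn)•(A-o) with hMad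
  set Mb := kk•(A-o) + ll•(B-o) + nn•(C-o) - (kk+ll+nn)•(B-o) with hMbd
  set Mc := kk•(A-o) + ll•(B-o) + nn•(C-o) - (kk+ll+nn)•(C-o) with hMcd
  have hMaS : Ma = (kk+ll+nn)•(L-A) := by
    rw [hMad, ← hLo]; module
  have hMbS : Mb = (kk+ll+nn)•(L-B) := by
    rw [hMbd, ← hLo]; module
  have hMcS : Mc = (kk+ll+nn)•(L-C) := by
    rw [hMcd, ← hLo]; module
  have hMane : Ma ≠ 0 := by
    rw [hMaS]
    exact smul_ne_zero hSne (sub_ne_zero.mpr (hLnotin A hA))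
  have hMbne : Mb ≠ 0 := by
    rw [hMbS]
    exact smul_ne_zero hSne (sub_ne_zero.mpr (hLnotin B hB))
  have hMcne : Mc ≠ 0 := by
    rw [hMcS]
    exact smul_ne_zero hSne (sub_ne_zero.mpr (hLnotin C hC))
  have hDb : ⟪Mb,Mb⟫ ≠ 0 := fun h => hMbne (inner_self_eq_zero.mp h)
  have hDc : ⟪Mc,Mc⟫ ≠ 0 := fun h => hMcne (inner_self_eq_zero.mp h)
  -- parametrize B' and C'
  obtain ⟨tb, hB'p⟩ := collinear_param hB'col (fun h => hLnotin B hB h.symm)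
  obtain ⟨tc, hC'p⟩ := collinear_param hC'col (fun h => hLnotin C hC h.symm)
  have htbne : tb ≠ 0 := by
    intro h; apply hB'ne; rw [hB'p, h]; simp
  have htcne : tc ≠ 0 := by
    intro h; apply hC'ne; rw [hC'p, h]; simp
  set sb := tb / (kk+ll+nn) with hsbd
  set sc := tc / (kk+ll+nn) with hscd
  have hsbne : sb ≠ 0 := div_ne_zero htbne hSne
  have hscne : sc ≠ 0 := div_ne_zero htcne hSne
  have hb'o : B' - o = (B-o) + sb•Mb := by
    rw [hB'p, hMbS, smul_smul, hsbd, div_mul_cancel₀ _ hSne]; module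
  have hc'o : C' - o = (C-o) + sc•Mc := by
    rw [hC'p, hMcS, smul_smul, hscd, div_mul_cancel₀ _ hSne]; module
  have hsb : sb * ⟪Mb,Mb⟫ = -(2*⟪B-o,Mb⟫) := by
    have hB'm : ⟪B'-o, B'-o⟫ = r^2 := hIP B' hB'w
    rw [hb'o] at hB'm
    simp only [inner_add_left, inner_add_right, real_inner_smul_left, real_inner_smul_right,
      hbb, real_inner_comm (B-o) Mb] at hB'm
    have h0 : sb * (2*⟪B-o,Mb⟫ + sb*⟪Mb,Mb⟫) = 0 := by linear_combination hB'm
    have h1 := (mul_eq_zero.mp h0).resolve_left hsbne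
    linear_combination h1
  have hsc : sc * ⟪Mc,Mc⟫ = -(2*⟪C-o,Mc⟫) := by
    have hC'm : ⟪C'-o, C'-o⟫ = r^2 := hIP C' hC'w
    rw [hc'o] at hC'm
    simp only [inner_add_left, inner_add_right, real_inner_smul_left, real_inner_smul_right,
      hcc, real_inner_comm (C-o) Mc] at hC'm
    have h0 : sc * (2*⟪C-o,Mc⟫ + sc*⟪Mc,Mc⟫) = 0 := by linear_combination hC'm
    have h1 := (mul_eq_zero.mp h0).resolve_left hscne
    linear_combination h1
  -- the tangent point equations
  have hXb' : ⟪X - o, B' - o⟫ = r^2 := by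
    rw [← sub_sub_sub_cancel_right X B' o, inner_sub_left, hIP B' hB'w] at hXB'
    linarith
  have hXc' : ⟪X - o, C' - o⟫ = r^2 := by
    rw [← sub_sub_sub_cancel_right X C' o, inner_sub_left, hIP C' hC'w] at hXC'
    linarith
  have hr2pos : (0:ℝ) < r^2 := pow_pos hr 2
  -- the determinant of b', c' is nonzero
  have coord : ∀ u v : Pt, ⟪u,v⟫ = u 0 * v 0 + u 1 * v 1 := by
    intro u v; simp [PiLp.inner_apply, Fin.sum_univ_two]; ring
  have hdet : (B'-o) 0 * (C'-o) 1 - (B'-o) 1 * (C'-o) 0 ≠ 0 := by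
    intro hdet0
    have hbp := hIP B' hB'w
    have hcp := hIP C' hC'w
    rw [coord] at hbp hcp
    have hsq : ⟪B'-o, C'-o⟫^2 = (r^2)^2 := by
      rw [coord]
      linear_combination ((C'-o) 0 * (C'-o) 0 + (C'-o) 1 * (C'-o) 1) * hbp + r^2 * hcp -
        ((B'-o) 0 * (C'-o) 1 - (B'-o) 1 * (C'-o) 0) * hdet0
    have h2 : (⟪B'-o, C'-o⟫ - r^2) * (⟪B'-o, C'-o⟫ + r^2) = 0 := by linear_combination hsq
    rcases mul_eq_zero.mp h2 with h3 | h3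
    · -- B' = C', leads to A, B, C collinear
      have hE : ⟪B'-o, C'-o⟫ = r^2 := by linarith
      have hd0 : ⟪(B'-o) - (C'-o), (B'-o) - (C'-o)⟫ = 0 := by
        rw [real_inner_sub_sub_self, hIP B' hB'w, hIP C' hC'w, hE]
        ring
      have hB'C' : B' = C' := sub_left_inj.mp (sub_eq_zero.mp (inner_self_eq_zero.mp hd0))
      have hLB' : L ≠ B' := hLnotin B' hB'w
      have htb1 : tb ≠ 1 := by
        intro h
        have hBL : B' = L := by rw [hB'p, h, one_smul, add_sub_cancel]
        exact hLB' hBL.symm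
      have htc1 : tc ≠ 1 := by
        intro h
        have hCL : C' = L := by rw [hC'p, h, one_smul, add_sub_cancel]
        exact (hLnotin C' hC'w) hCL.symm
      have hBd : B - L = (1-tb)⁻¹ • (B' - L) := by
        have h5 : B' - L = (1-tb) • (B - L) := by rw [hB'p]; module
        rw [h5, smul_smul, inv_mul_cancel₀ (sub_ne_zero.mpr (Ne.symm htb1)), one_smul]
      have hCd : C - L = (1-tc)⁻¹ • (B' - L) := by
        have h5 : C' - L = (1-tc) • (C - L) := by rw [hC'p]; module
        rw [← hB'C'] at h5
        rw [h5, smul_smul, inv_mul_cancel₀ (sub_ne_zero.mpr (Ne.symm htc1)), one_smul]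
      have hAL0 : kk•(A-L) + ll•(B-L) + nn•(C-L) = 0 := by
        have h3' : kk•(A-L) + ll•(B-L) + nn•(C-L)
            = (kk•(A-o)+ll•(B-o)+nn•(C-o)) - (kk+ll+nn)•(L-o) := by module
        rw [← hLo, sub_self] at h3'
        exact h3'
      have hAd : A - L = (kk⁻¹ * -(ll * (1-tb)⁻¹ + nn * (1-tc)⁻¹)) • (B' - L) := by
        have h6 : A - L = kk⁻¹ • (kk • (A-L)) := by
          rw [smul_smul, inv_mul_cancel₀ (ne_of_gt hkpos), one_smul]
        have h7 : kk•(A-L) = -(ll•(B-L) + nn•(C-L)) := by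
          rw [add_assoc] at hAL0
          exact eq_neg_of_add_eq_zero_left hAL0
        rw [h6, h7, hBd, hCd]; module
      apply absurd hABC
      rw [affineIndependent_iff_not_collinear_set, not_not,
        collinear_iff_exists_forall_eq_smul_vadd]
      refine ⟨L, B' - L, ?_⟩
      intro q hq
      simp only [Set.mem_insert_iff, Set.mem_singleton_iff] at hq
      rcases hq with rfl | rfl | rfl
      · exact ⟨kk⁻¹ * -(ll * (1-tb)⁻¹ + nn * (1-tc)⁻¹),
          by rw [vadd_eq_add, ← sub_eq_iff_eq_add]; exact hAd⟩
      · exact ⟨(1-tb)⁻¹, by rw [vadd_eq_add, ← sub_eq_iff_eq_add]; exact hBd⟩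
      · exact ⟨(1-tc)⁻¹, by rw [vadd_eq_add, ← sub_eq_iff_eq_add]; exact hCd⟩
    · -- C' - o = -(B' - o), contradicts the tangent equations
      have hE : ⟪B'-o, C'-o⟫ = -r^2 := by linarith
      have hd0 : ⟪(B'-o) + (C'-o), (B'-o) + (C'-o)⟫ = 0 := by
        rw [real_inner_add_add_self, hIP B' hB'w, hIP C' hC'w, hE]
        ring
      have hC'B' : C' - o = -(B' - o) := by
        have := add_eq_zero_iff_eq_neg.mp (inner_self_eq_zero.mp hd0)
        linear_combination (norm := module) this
      rw [hC'B', inner_neg_right, hXb'] at hXc'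
      linarith
  -- the main identity
  have star := star_identity (A-o) (B-o) (C-o) (r^2) ⟪A-o,B-o⟫ ⟪B-o,C-o⟫ ⟪C-o,A-o⟫
    sb sc kk ll nn haa hbb hcc rfl (real_inner_comm (A-o) (B-o)) rfl
    (real_inner_comm (B-o) (C-o)) rfl (real_inner_comm (C-o) (A-o)) hk hl hn
    Ma Mb Mc hMad hMbd hMcd hDb hDc hsb hsc
  rw [← hb'o, ← hc'o] at star
  -- X lies on line A + ℝ • Ma
  have hnotboth : ⟪Ma, B'-o⟫ ≠ 0 ∨ ⟪Ma, C'-o⟫ ≠ 0 := by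
    by_contra hcon
    push_neg at hcon
    exact hMane (det_perp hdet hcon.1 hcon.2)
  have hexists : ∃ s : ℝ, X - A = s • Ma := by
    rcases hnotboth with h | h
    · refine ⟨(r^2 - ⟪A-o, B'-o⟫)/⟪Ma, B'-o⟫, ?_⟩
      have perpb : ⟪(X - A) - ((r^2 - ⟪A-o, B'-o⟫)/⟪Ma, B'-o⟫)•Ma, B'-o⟫ = 0 := by
        rw [inner_sub_left, real_inner_smul_left, ← sub_sub_sub_cancel_right X A o,
          inner_sub_left, hXb', div_mul_cancel₀ _ h]
        ring
      have perpc : ⟪(X - A) - ((r^2 - ⟪A-o, B'-o⟫)/⟪Ma, B'-o⟫)•Ma, C'-o⟫ = 0 := by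
        rw [inner_sub_left, real_inner_smul_left, ← sub_sub_sub_cancel_right X A o,
          inner_sub_left, hXc']
        have hkey : ((r^2 - ⟪A-o, B'-o⟫)/⟪Ma, B'-o⟫) * ⟪Ma, C'-o⟫ = r^2 - ⟪A-o, C'-o⟫ := by
          rw [div_mul_eq_mul_div, div_eq_iff h]
          linear_combination star
        rw [hkey]
        ring
      exact sub_eq_zero.mp (det_perp hdet perpb perpc)
    · refine ⟨(r^2 - ⟪A-o, C'-o⟫)/⟪Ma, C'-o⟫, ?_⟩
      have perpc : ⟪(X - A) - ((r^2 - ⟪A-o, C'-o⟫)/⟪Ma, C'-o⟫)•Ma, C'-o⟫ = 0 := by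
        rw [inner_sub_left, real_inner_smul_left, ← sub_sub_sub_cancel_right X A o,
          inner_sub_left, hXc', div_mul_cancel₀ _ h]
        ring
      have perpb : ⟪(X - A) - ((r^2 - ⟪A-o, C'-o⟫)/⟪Ma, C'-o⟫)•Ma, B'-o⟫ = 0 := by
        rw [inner_sub_left, real_inner_smul_left, ← sub_sub_sub_cancel_right X A o,
          inner_sub_left, hXb']
        have hkey : ((r^2 - ⟪A-o, C'-o⟫)/⟪Ma, C'-o⟫) * ⟪Ma, B'-o⟫ = r^2 - ⟪A-o, B'-o⟫ := by
          rw [div_mul_eq_mul_div, div_eq_iff h]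
          linear_combination -star
        rw [hkey]
        ring
      exact sub_eq_zero.mp (det_perp hdet perpb perpc)
  obtain ⟨s, hXA⟩ := hexists
  have hXL : X = AffineMap.lineMap A L (s*(kk+ll+nn)) := by
    have h6 : s • Ma = (s*(kk+ll+nn)) • (L - A) := by rw [hMaS, smul_smul]
    rw [AffineMap.lineMap_apply, vsub_eq_sub, vadd_eq_add, ← h6, ← hXA]
    abel
  have hXmem : X ∈ affineSpan ℝ ({A, L} : Set Pt) := by
    rw [hXL]; exact AffineMap.lineMap_mem_affineSpan_pair _ _ _
  have hALne : A ≠ L := Ne.symm (hLnotin A hA)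
  have hA'mem : A' ∈ affineSpan ℝ ({A, L} : Set Pt) :=
    hA'col.mem_affineSpan_of_mem_of_ne (by simp) (by simp) (by simp) hALne
  have hcol4 := collinear_insert_insert_of_mem_affineSpan_pair hA'mem hXmem
  have hseteq : ({A, A', L, X} : Set Pt) = {A', X, A, L} := by
    ext p; simp only [Set.mem_insert_iff, Set.mem_singleton_iff]; tauto
  rw [hseteq]
  exact hcol4
end
end

section
/- If A', B', C' are the second intersections of the symmedians AL, BL, CL of triangle ABC with its circumcircle ω, then L is also the Lemoine (symmedian) point of triangle A'B'C'. -/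
open EuclideanGeometry RealInnerProductSpace

noncomputable section

/-! ### Auxiliary lemmas -/

lemma inner_comb (p q : Pt) (a b c d : ℝ) :
    ⟪a • p + b • q, c • p + d • q⟫ =
      a * c * ⟪p, p⟫ + (a * d + b * c) * ⟪p, q⟫ + b * d * ⟪q, q⟫ := by
  simp only [inner_add_left, inner_add_right, real_inner_smul_left, real_inner_smul_right,
    real_inner_comm q p]
  ring

lemma inner_self_dist (A B : Pt) : ⟪B - A, B - A⟫ = dist A B ^ 2 := by
  rw [real_inner_self_eq_norm_sq, ← neg_sub, norm_neg, ← dist_eq_norm]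

lemma inner_pq (A B C : Pt) :
    ⟪B - A, C - A⟫ = (dist C A ^ 2 + dist A B ^ 2 - dist B C ^ 2) / 2 := by
  have h := norm_sub_sq_real (B - A) (C - A)
  have h2 : (B - A) - (C - A) = B - C := by abel
  rw [h2] at h
  simp only [← dist_eq_norm] at h
  rw [dist_comm B A, dist_comm C A] at h
  rw [dist_comm C A]
  linarith

lemma lemoine_rot (A B C : Pt) : lemoinePoint B C A = lemoinePoint A B C := by
  unfold lemoinePoint
  match_scalars <;> ring

set_option maxHeartbeats 800000 in
lemma second_inter (O A B C X : Pt) (R : ℝ)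
    (hA : dist A O = R) (hB : dist B O = R) (hC : dist C O = R) (hX : dist X O = R)
    (hXA : X ≠ A)
    (hy : dist C A ^ 2 ≠ 0) (hz : dist A B ^ 2 ≠ 0)
    (hS : dist B C ^ 2 + dist C A ^ 2 + dist A B ^ 2 ≠ 0)
    (hDa : 2 * dist C A ^ 2 + 2 * dist A B ^ 2 - dist B C ^ 2 ≠ 0)
    (hcol : Collinear ℝ ({A, lemoinePoint A B C, X} : Set Pt)) :
    X = A + (2 * dist C A ^ 2 / (2 * dist C A ^ 2 + 2 * dist A B ^ 2 - dist B C ^ 2)) • (B - A)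
          + (2 * dist A B ^ 2 / (2 * dist C A ^ 2 + 2 * dist A B ^ 2 - dist B C ^ 2)) • (C - A) := by
  obtain ⟨x, hxd⟩ : ∃ x, dist B C ^ 2 = x := ⟨_, rfl⟩
  obtain ⟨y, hyd⟩ : ∃ y, dist C A ^ 2 = y := ⟨_, rfl⟩
  obtain ⟨z, hzd⟩ : ∃ z, dist A B ^ 2 = z := ⟨_, rfl⟩
  rw [hxd] at hS hDa ⊢
  rw [hyd] at hy hS hDa ⊢
  rw [hzd] at hz hS hDa ⊢
  have hDa2 : -x + y * 2 + z * 2 ≠ 0 := fun h => hDa (by linarith)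
  have hpp : ⟪B - A, B - A⟫ = z := (inner_self_dist A B).trans hzd
  have hqq : ⟪C - A, C - A⟫ = y := by
    rw [inner_self_dist, dist_comm A C, hyd]
  have hpq : ⟪B - A, C - A⟫ = (y + z - x) / 2 := by
    rw [inner_pq, hxd, hyd, hzd]
  have hpu : ⟪B - A, A - O⟫ = -z / 2 := by
    have h := norm_add_sq_real (B - A) (A - O)
    have h2 : (B - A) + (A - O) = B - O := by abel
    rw [h2] at h
    simp only [← dist_eq_norm] at h
    rw [hB, hA, dist_comm B A, hzd] at h
    linarith
  have hqu : ⟪C - A, A - O⟫ = -y / 2 := by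
    have h := norm_add_sq_real (C - A) (A - O)
    have h2 : (C - A) + (A - O) = C - O := by abel
    rw [h2] at h
    simp only [← dist_eq_norm] at h
    rw [hC, hA, hyd] at h
    linarith
  have hL : lemoinePoint A B C = A + (y / (x + y + z)) • (B - A) + (z / (x + y + z)) • (C - A) := by
    unfold lemoinePoint
    rw [hxd, hyd, hzd]
    match_scalars <;> (field_simp [hS, hDa, hy, hz, hDa2]; try ring)
  have hLA : lemoinePoint A B C - A = (y / (x + y + z)) • (B - A) + (z / (x + y + z)) • (C - A) := by
    rw [hL]; abel
  have hnorm : ⟪lemoinePoint A B C - A, lemoinePoint A B C - A⟫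
      = y * z * (2 * y + 2 * z - x) / (x + y + z) ^ 2 := by
    rw [hLA, inner_comb, hpp, hqq, hpq]
    field_simp [hS, hDa, hy, hz, hDa2]
    ring
  have hLu : ⟪lemoinePoint A B C - A, A - O⟫ = -(y * z) / (x + y + z) := by
    rw [hLA, inner_add_left, real_inner_smul_left, real_inner_smul_left, hpu, hqu]
    field_simp [hS, hDa, hy, hz, hDa2]
    ring
  have hNne : y * z * (2 * y + 2 * z - x) / (x + y + z) ^ 2 ≠ 0 :=
    div_ne_zero (mul_ne_zero (mul_ne_zero hy hz) hDa) (pow_ne_zero _ hS)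
  have hLne : lemoinePoint A B C ≠ A := by
    intro h
    apply hNne
    rw [← hnorm, h]
    simp
  obtain ⟨t, ht⟩ : ∃ t : ℝ, X - A = t • (lemoinePoint A B C - A) := by
    rw [collinear_iff_of_mem (Set.mem_insert A _)] at hcol
    obtain ⟨v, hv⟩ := hcol
    obtain ⟨r, hr⟩ := hv (lemoinePoint A B C) (by simp)
    obtain ⟨s, hs⟩ := hv X (by simp)
    have hr0 : r ≠ 0 := by
      rintro rfl
      rw [zero_smul, zero_vadd] at hr
      exact hLne hr
    refine ⟨s / r, ?_⟩
    rw [hr, hs]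
    simp only [vadd_eq_add, add_sub_cancel_right, smul_smul]
    rw [div_mul_cancel₀ _ hr0]
  have ht0 : t ≠ 0 := by
    rintro rfl
    rw [zero_smul, sub_eq_zero] at ht
    exact hXA ht
  have hexp : ⟪X - O, X - O⟫
      = t ^ 2 * ⟪lemoinePoint A B C - A, lemoinePoint A B C - A⟫
        + 2 * t * ⟪lemoinePoint A B C - A, A - O⟫ + ⟪A - O, A - O⟫ := by
    have h2 : X - O = t • (lemoinePoint A B C - A) + (1 : ℝ) • (A - O) := by
      rw [one_smul, ← sub_add_sub_cancel X A O, ht]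
    rw [h2, inner_comb]
    ring
  have hXOA : ⟪X - O, X - O⟫ = ⟪A - O, A - O⟫ := by
    rw [real_inner_self_eq_norm_sq, real_inner_self_eq_norm_sq, ← dist_eq_norm, ← dist_eq_norm,
      hX, hA]
  have hnorm2 : ⟪lemoinePoint A B C - A, lemoinePoint A B C - A⟫ * (x + y + z) ^ 2
      = y * z * (2 * y + 2 * z - x) := by
    rw [hnorm]; field_simp [hS, hDa, hy, hz, hDa2]
  have hLu2 : ⟪lemoinePoint A B C - A, A - O⟫ * (x + y + z) = -(y * z) := by
    rw [hLu]; field_simp [hS, hDa, hy, hz, hDa2]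
  have e1 : t ^ 2 * ⟪lemoinePoint A B C - A, lemoinePoint A B C - A⟫
      + 2 * t * ⟪lemoinePoint A B C - A, A - O⟫ = 0 := by
    linarith [hexp, hXOA]
  have e2 : t * (t * (y * z * (2 * y + 2 * z - x)) - 2 * (x + y + z) * (y * z)) = 0 := by
    linear_combination (x + y + z) ^ 2 * e1 - t ^ 2 * hnorm2 - 2 * t * (x + y + z) * hLu2
  have e3 : t * (y * z * (2 * y + 2 * z - x)) - 2 * (x + y + z) * (y * z) = 0 := by
    rcases mul_eq_zero.mp e2 with h | h
    · exact absurd h ht0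
    · exact h
  have hteq : t = 2 * (x + y + z) / (2 * y + 2 * z - x) := by
    rw [eq_div_iff hDa]
    have h4 : t * (2 * y + 2 * z - x) * (y * z) = 2 * (x + y + z) * (y * z) := by
      linear_combination e3
    exact mul_right_cancel₀ (mul_ne_zero hy hz) h4
  have hXf : X = A + t • (lemoinePoint A B C - A) := by
    rw [← ht]; abel
  rw [hXf, hLA, hteq]
  match_scalars <;> (field_simp [hDa2, hS]; try ring)

lemma lemoine_scale (A B C : Pt) (e u v w : ℝ) (he : e ≠ 0)
    (h1 : dist B C ^ 2 = e * u) (h2 : dist C A ^ 2 = e * v) (h3 : dist A B ^ 2 = e * w) :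
    lemoinePoint A B C = (u / (u + v + w)) • A + (v / (u + v + w)) • B + (w / (u + v + w)) • C := by
  unfold lemoinePoint
  rw [h1, h2, h3, show e * u + e * v + e * w = e * (u + v + w) by ring,
    mul_div_mul_left _ _ he, mul_div_mul_left _ _ he, mul_div_mul_left _ _ he]

set_option maxHeartbeats 1000000 in
lemma main_calc (A B C A' B' C' : Pt) (x y z : ℝ)
    (hx : 0 < x) (hy : 0 < y) (hz : 0 < z)
    (hDa : 0 < 2 * y + 2 * z - x) (hDb : 0 < 2 * z + 2 * x - y) (hDc : 0 < 2 * x + 2 * y - z)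
    (hEa : 0 < (2 * x + y) * (2 * x + z) - 2 * (y - z) ^ 2)
    (hEb : 0 < (2 * y + z) * (2 * y + x) - 2 * (z - x) ^ 2)
    (hEc : 0 < (2 * z + x) * (2 * z + y) - 2 * (x - y) ^ 2)
    (hxe : dist B C ^ 2 = x) (hye : dist C A ^ 2 = y) (hze : dist A B ^ 2 = z)
    (hA' : A' = A + (2 * y / (2 * y + 2 * z - x)) • (B - A)
        + (2 * z / (2 * y + 2 * z - x)) • (C - A))
    (hB' : B' = B + (2 * z / (2 * z + 2 * x - y)) • (C - B)
        + (2 * x / (2 * z + 2 * x - y)) • (A - B))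
    (hC' : C' = C + (2 * x / (2 * x + 2 * y - z)) • (A - C)
        + (2 * y / (2 * x + 2 * y - z)) • (B - C)) :
    lemoinePoint A' B' C' = lemoinePoint A B C := by
  have hS : x + y + z ≠ 0 := by positivity
  have hx0 : x ≠ 0 := ne_of_gt hx
  have hy0 : y ≠ 0 := ne_of_gt hy
  have hz0 : z ≠ 0 := ne_of_gt hz
  have hDa0 : 2 * y + 2 * z - x ≠ 0 := ne_of_gt hDa
  have hDb0 : 2 * z + 2 * x - y ≠ 0 := ne_of_gt hDb
  have hDc0 : 2 * x + 2 * y - z ≠ 0 := ne_of_gt hDc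
  have hpp : ⟪B - A, B - A⟫ = z := by rw [inner_self_dist, hze]
  have hqq : ⟪C - A, C - A⟫ = y := by rw [inner_self_dist, dist_comm A C, hye]
  have hpq : ⟪B - A, C - A⟫ = (y + z - x) / 2 := by rw [inner_pq, hxe, hye, hze]
  have hK : ((2 * x + y) * (2 * x + z) - 2 * (y - z) ^ 2) * (2 * y + 2 * z - x) ^ 2
      + ((2 * y + z) * (2 * y + x) - 2 * (z - x) ^ 2) * (2 * z + 2 * x - y) ^ 2
      + ((2 * z + x) * (2 * z + y) - 2 * (x - y) ^ 2) * (2 * x + 2 * y - z) ^ 2 ≠ 0 :=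
    ne_of_gt (add_pos (add_pos (mul_pos hEa (pow_pos hDa 2)) (mul_pos hEb (pow_pos hDb 2)))
      (mul_pos hEc (pow_pos hDc 2)))
  have hF1 : 2 * (y + z) - x ≠ 0 := by rw [mul_add]; exact hDa0
  have hF2 : 2 * (z + x) - y ≠ 0 := by rw [mul_add]; exact hDb0
  have hF3 : 2 * (x + y) - z ≠ 0 := by rw [mul_add]; exact hDc0
  have hd1 : dist B' C' ^ 2 = 9 * x * y * z * ((2 * x + y) * (2 * x + z) - 2 * (y - z) ^ 2)
      / ((2 * z + 2 * x - y) * (2 * x + 2 * y - z)) ^ 2 := by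
    have hdiff : B' - C' = (1 - (2 * x + 2 * z) / (2 * z + 2 * x - y)
          - 2 * y / (2 * x + 2 * y - z)) • (B - A)
        + (2 * z / (2 * z + 2 * x - y) - (1 - (2 * x + 2 * y) / (2 * x + 2 * y - z))) • (C - A) := by
      rw [hB', hC']
      match_scalars <;> ring
    rw [dist_eq_norm, ← real_inner_self_eq_norm_sq, hdiff, inner_comb, hpp, hqq, hpq]
    field_simp [hS, hx0, hy0, hz0, hDa0, hDb0, hDc0, hK]
    ring
  have hd2 : dist C' A' ^ 2 = 9 * x * y * z * ((2 * y + z) * (2 * y + x) - 2 * (z - x) ^ 2)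
      / ((2 * y + 2 * z - x) * (2 * x + 2 * y - z)) ^ 2 := by
    have hdiff : C' - A' = (2 * y / (2 * x + 2 * y - z) - 2 * y / (2 * y + 2 * z - x)) • (B - A)
        + ((1 - (2 * x + 2 * y) / (2 * x + 2 * y - z)) - 2 * z / (2 * y + 2 * z - x)) • (C - A) := by
      rw [hC', hA']
      match_scalars <;> ring
    rw [dist_eq_norm, ← real_inner_self_eq_norm_sq, hdiff, inner_comb, hpp, hqq, hpq]
    field_simp [hS, hx0, hy0, hz0, hDa0, hDb0, hDc0, hK]
    ring
  have hd3 : dist A' B' ^ 2 = 9 * x * y * z * ((2 * z + x) * (2 * z + y) - 2 * (x - y) ^ 2)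
      / ((2 * y + 2 * z - x) * (2 * z + 2 * x - y)) ^ 2 := by
    have hdiff : A' - B' = (2 * y / (2 * y + 2 * z - x)
          - (1 - (2 * x + 2 * z) / (2 * z + 2 * x - y))) • (B - A)
        + (2 * z / (2 * y + 2 * z - x) - 2 * z / (2 * z + 2 * x - y)) • (C - A) := by
      rw [hA', hB']
      match_scalars <;> ring
    rw [dist_eq_norm, ← real_inner_self_eq_norm_sq, hdiff, inner_comb, hpp, hqq, hpq]
    field_simp [hS, hx0, hy0, hz0, hDa0, hDb0, hDc0, hK]
    ring
  have hS3 : -x + (-y - z) ≠ 0 := fun h => hS (by linarith)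
  have hLc : lemoinePoint A B C = A + (y / (x + y + z)) • (B - A)
      + (z / (x + y + z)) • (C - A) := by
    unfold lemoinePoint
    rw [hxe, hye, hze]
    match_scalars <;> (field_simp [hS, hS3]; try ring)
  obtain ⟨s, hs⟩ : ∃ s : ℝ, x + y + z = s := ⟨_, rfl⟩
  obtain ⟨da, hda⟩ : ∃ d : ℝ, 2 * y + 2 * z - x = d := ⟨_, rfl⟩
  obtain ⟨db, hdb⟩ : ∃ d : ℝ, 2 * z + 2 * x - y = d := ⟨_, rfl⟩
  obtain ⟨dc, hdc⟩ : ∃ d : ℝ, 2 * x + 2 * y - z = d := ⟨_, rfl⟩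
  have hs0 : s ≠ 0 := by rw [← hs]; exact hS
  have hda0 : da ≠ 0 := by rw [← hda]; exact hDa0
  have hdb0 : db ≠ 0 := by rw [← hdb]; exact hDb0
  have hdc0 : dc ≠ 0 := by rw [← hdc]; exact hDc0
  have he : (9 * x * y * z / (da * db * dc) ^ 2 : ℝ) ≠ 0 :=
    div_ne_zero (mul_ne_zero (mul_ne_zero (mul_ne_zero (by norm_num) hx0) hy0) hz0)
      (pow_ne_zero 2 (mul_ne_zero (mul_ne_zero hda0 hdb0) hdc0))
  have hd1' : dist B' C' ^ 2 = (9 * x * y * z / (da * db * dc) ^ 2)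
      * (((2 * x + y) * (2 * x + z) - 2 * (y - z) ^ 2) * da ^ 2) := by
    rw [hd1, hdb, hdc]
    field_simp [hda0, hdb0, hdc0]
  have hd2' : dist C' A' ^ 2 = (9 * x * y * z / (da * db * dc) ^ 2)
      * (((2 * y + z) * (2 * y + x) - 2 * (z - x) ^ 2) * db ^ 2) := by
    rw [hd2, hda, hdc]
    field_simp [hda0, hdb0, hdc0]
  have hd3' : dist A' B' ^ 2 = (9 * x * y * z / (da * db * dc) ^ 2)
      * (((2 * z + x) * (2 * z + y) - 2 * (x - y) ^ 2) * dc ^ 2) := by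
    rw [hd3, hda, hdb]
    field_simp [hda0, hdb0, hdc0]
  obtain ⟨W, hW⟩ : ∃ W : ℝ, ((2 * x + y) * (2 * x + z) - 2 * (y - z) ^ 2) * da ^ 2
      + ((2 * y + z) * (2 * y + x) - 2 * (z - x) ^ 2) * db ^ 2
      + ((2 * z + x) * (2 * z + y) - 2 * (x - y) ^ 2) * dc ^ 2 = W := ⟨_, rfl⟩
  have hW0 : W ≠ 0 := by rw [← hW, ← hda, ← hdb, ← hdc]; exact hK
  rw [hs] at hLc
  rw [hda] at hA'
  rw [hdb] at hB'
  rw [hdc] at hC'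
  rw [lemoine_scale A' B' C' _ _ _ _ he hd1' hd2' hd3', hW, hA', hB', hC', hLc]
  match_scalars <;>
  · field_simp [hs0, hda0, hdb0, hdc0, hW0]
    rw [← hW, ← hs, ← hda, ← hdb, ← hdc]
    ring

set_option maxHeartbeats 2000000 in
theorem stmt1    (A B C : Pt) (hABC : AffineIndependent ℝ ![A, B, C])
    (ω : EuclideanGeometry.Sphere Pt) (hr : 0 < ω.radius)
    (hA : A ∈ ω) (hB : B ∈ ω) (hC : C ∈ ω)
    (L : Pt) (hL : L = lemoinePoint A B C)
    (A' : Pt) (hA'w : A' ∈ ω) (hA'ne : A' ≠ A) (hA'col : Collinear ℝ ({A, L, A'} : Set Pt))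
    (B' : Pt) (hB'w : B' ∈ ω) (hB'ne : B' ≠ B) (hB'col : Collinear ℝ ({B, L, B'} : Set Pt))
    (C' : Pt) (hC'w : C' ∈ ω) (hC'ne : C' ≠ C) (hC'col : Collinear ℝ ({C, L, C'} : Set Pt))
    : lemoinePoint A' B' C' = L := by
  subst hL
  rw [EuclideanGeometry.mem_sphere] at hA hB hC hA'w hB'w hC'w
  have hncol : ¬ Collinear ℝ ({A, B, C} : Set Pt) :=
    affineIndependent_iff_not_collinear_set.mp hABC
  have tri : ∀ X Y Z : Pt, ¬ Collinear ℝ ({X, Y, Z} : Set Pt) →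
      dist X Z < dist X Y + dist Y Z := by
    intro X Y Z h
    rcases lt_or_eq_of_le (dist_triangle X Y Z) with h' | h'
    · exact h'
    · exact absurd (dist_add_dist_eq_iff.mp h'.symm).collinear h
  have hs1 : ({B, A, C} : Set Pt) = {A, B, C} := Set.insert_comm B A {C}
  have hs2 : ({C, B, A} : Set Pt) = {A, B, C} := by
    rw [Set.insert_comm, Set.pair_comm]
    exact Set.insert_comm B A {C}
  have hs3 : ({A, C, B} : Set Pt) = {A, B, C} := by rw [Set.pair_comm]
  have h1 := tri B A C (by rw [hs1]; exact hncol)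
  have h2 := tri C B A (by rw [hs2]; exact hncol)
  have h3 := tri A C B (by rw [hs3]; exact hncol)
  rw [dist_comm B A, dist_comm A C] at h1
  rw [dist_comm C B, dist_comm B A] at h2
  rw [dist_comm A C, dist_comm C B] at h3
  -- h1 : dist B C < dist A B + dist C A
  -- h2 : dist C A < dist B C + dist A B
  -- h3 : dist A B < dist C A + dist B C
  have ha0 : 0 < dist B C := by linarith
  have hb0 : 0 < dist C A := by linarith
  have hc0 : 0 < dist A B := by linarith
  have hx0 : 0 < dist B C ^ 2 := pow_pos ha0 2
  have hy0 : 0 < dist C A ^ 2 := pow_pos hb0 2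
  have hz0 : 0 < dist A B ^ 2 := pow_pos hc0 2
  have hDa : 0 < 2 * dist C A ^ 2 + 2 * dist A B ^ 2 - dist B C ^ 2 := by
    nlinarith [h1, sq_nonneg (dist C A - dist A B)]
  have hDb : 0 < 2 * dist A B ^ 2 + 2 * dist B C ^ 2 - dist C A ^ 2 := by
    nlinarith [h2, sq_nonneg (dist A B - dist B C)]
  have hDc : 0 < 2 * dist B C ^ 2 + 2 * dist C A ^ 2 - dist A B ^ 2 := by
    nlinarith [h3, sq_nonneg (dist B C - dist C A)]
  have hEa : 0 < (2 * dist B C ^ 2 + dist C A ^ 2) * (2 * dist B C ^ 2 + dist A B ^ 2)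
      - 2 * (dist C A ^ 2 - dist A B ^ 2) ^ 2 := by
    have hP : 0 < (dist B C + dist C A - dist A B) * (dist B C - dist C A + dist A B)
        * ((dist C A + dist A B) ^ 2) :=
      mul_pos (mul_pos (by linarith) (by linarith)) (by positivity)
    nlinarith [hP, sq_nonneg (2 * dist B C ^ 2 - dist C A * dist A B)]
  have hEb : 0 < (2 * dist C A ^ 2 + dist A B ^ 2) * (2 * dist C A ^ 2 + dist B C ^ 2)
      - 2 * (dist A B ^ 2 - dist B C ^ 2) ^ 2 := by
    have hP : 0 < (dist C A + dist A B - dist B C) * (dist C A - dist A B + dist B C)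
        * ((dist A B + dist B C) ^ 2) :=
      mul_pos (mul_pos (by linarith) (by linarith)) (by positivity)
    nlinarith [hP, sq_nonneg (2 * dist C A ^ 2 - dist A B * dist B C)]
  have hEc : 0 < (2 * dist A B ^ 2 + dist B C ^ 2) * (2 * dist A B ^ 2 + dist C A ^ 2)
      - 2 * (dist B C ^ 2 - dist C A ^ 2) ^ 2 := by
    have hP : 0 < (dist A B + dist B C - dist C A) * (dist A B - dist B C + dist C A)
        * ((dist B C + dist C A) ^ 2) :=
      mul_pos (mul_pos (by linarith) (by linarith)) (by positivity)
    nlinarith [hP, sq_nonneg (2 * dist A B ^ 2 - dist B C * dist C A)]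
  have hSne : dist B C ^ 2 + dist C A ^ 2 + dist A B ^ 2 ≠ 0 := by positivity
  have hSne2 : dist C A ^ 2 + dist A B ^ 2 + dist B C ^ 2 ≠ 0 := by positivity
  have hSne3 : dist A B ^ 2 + dist B C ^ 2 + dist C A ^ 2 ≠ 0 := by positivity
  have hA'eq := second_inter ω.center A B C A' ω.radius hA hB hC hA'w hA'ne
    (ne_of_gt hy0) (ne_of_gt hz0) hSne (ne_of_gt hDa) hA'col
  rw [← lemoine_rot A B C] at hB'col
  have hB'eq := second_inter ω.center B C A B' ω.radius hB hC hA hB'w hB'ne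
    (ne_of_gt hz0) (ne_of_gt hx0) hSne2 (ne_of_gt hDb) hB'col
  have hrot2 : lemoinePoint C A B = lemoinePoint A B C :=
    (lemoine_rot B C A).trans (lemoine_rot A B C)
  rw [← hrot2] at hC'col
  have hC'eq := second_inter ω.center C A B C' ω.radius hC hA hB hC'w hC'ne
    (ne_of_gt hx0) (ne_of_gt hy0) hSne3 (ne_of_gt hDc) hC'col
  exact main_calc A B C A' B' C' (dist B C ^ 2) (dist C A ^ 2) (dist A B ^ 2)
    hx0 hy0 hz0 hDa hDb hDc hEa hEb hEc rfl rfl rfl hA'eq hB'eq hC'eq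
end
end

section
/- The quadrilateral AC'A'B' is harmonic; that is, the cross-ratio (A, A'; B', C') on the circumcircle equals -1, i.e., AB'·A'C' = AC'·A'B'. -/
open EuclideanGeometry RealInnerProductSpace

noncomputable section

lemma Dne' {X Y Z : Pt} (h : ¬ Collinear ℝ ({X, Y, Z} : Set Pt)) {β γ : ℝ} (hβ : β ≠ 0) :
    β • (Y - X) + γ • (Z - X) ≠ 0 := by
  intro h0
  apply h
  apply (collinear_iff_of_mem (Set.mem_insert X _)).mpr
  refine ⟨Z - X, ?_⟩
  rintro P (rfl | rfl | rfl)
  · exact ⟨0, by simp⟩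
  · refine ⟨-γ/β, ?_⟩
    have h1 : β • (P - X) = -(γ • (Z - X)) := eq_neg_of_add_eq_zero_left h0
    have h2 : P - X = β⁻¹ • -(γ • (Z - X)) := ((inv_smul_eq_iff₀ hβ).mpr h1.symm).symm
    have h3 : β⁻¹ • -(γ • (Z - X)) = (-γ/β) • (Z - X) := by
      rw [smul_neg, smul_smul, ← neg_smul]
      congr 1
      field_simp
    rw [vadd_eq_add, ← h3, ← h2]
    abel
  · exact ⟨1, by rw [vadd_eq_add, one_smul, sub_add_cancel]⟩

lemma second_point {O x x' L D : Pt} {r : ℝ}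
    (hx : ‖x - O‖ = r) (hx' : ‖x' - O‖ = r)
    (hD : D ≠ 0) (hLx : ∃ c : ℝ, c ≠ 0 ∧ L - x = c • D)
    (hcol : Collinear ℝ ({x, L, x'} : Set Pt)) (hne : x' ≠ x) :
    x' - O = (x - O) - (2 * ⟪x - O, D⟫ / ⟪D, D⟫) • D := by
  obtain ⟨c, hc0, hcD⟩ := hLx
  obtain ⟨d, hd⟩ := (collinear_iff_of_mem (Set.mem_insert x _)).mp hcol
  obtain ⟨rL, hrL⟩ := hd L (by simp)
  obtain ⟨rx, hrx⟩ := hd x' (by simp)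
  have hLsub : L - x = rL • d := by rw [hrL, vadd_eq_add]; abel
  have hrLne : rL ≠ 0 := by
    intro h0
    rw [h0, zero_smul] at hLsub
    rw [hLsub] at hcD
    rcases smul_eq_zero.mp hcD.symm with h | h
    · exact hc0 h
    · exact hD h
  have hdD : d = (rL⁻¹ * c) • D := by
    rw [mul_smul, ← hcD, hLsub, inv_smul_smul₀ hrLne]
  have hxx : x' - x = (rx * (rL⁻¹ * c)) • D := by
    rw [hrx, vadd_eq_add, hdD, smul_smul]
    abel
  set t := rx * (rL⁻¹ * c) with htd
  have h1 : x' - O = (x - O) + t • D := by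
    rw [← hxx]; abel
  have hDD : ⟪D, D⟫ ≠ 0 := inner_self_ne_zero.mpr hD
  have hquad : t * (t * ⟪D, D⟫ + 2 * ⟪x - O, D⟫) = 0 := by
    have e1 : ‖x' - O‖^2 = ‖x - O‖^2 := by rw [hx, hx']
    rw [h1, norm_add_sq_real] at e1
    have e2 : ‖t • D‖^2 = t^2 * ⟪D, D⟫ := by
      rw [norm_smul, mul_pow, real_inner_self_eq_norm_sq, Real.norm_eq_abs, sq_abs]
    rw [real_inner_smul_right, e2] at e1
    nlinarith [e1]
  have ht0 : t ≠ 0 := by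
    intro h0
    apply hne
    rw [h0, zero_smul] at hxx
    exact sub_eq_zero.mp hxx
  have ht : t = -(2 * ⟪x - O, D⟫) / ⟪D, D⟫ := by
    have h2 : t * ⟪D, D⟫ + 2 * ⟪x - O, D⟫ = 0 := by
      rcases mul_eq_zero.mp hquad with h | h
      · exact absurd h ht0
      · exact h
    rw [eq_div_iff hDD]
    linarith [h2]
  rw [h1, ht, neg_div, neg_smul, ← sub_eq_add_neg]



private lemma key_identity (p q rv rr : ℝ)
    (iuDAe ivDAe iwDAe iuDBe ivDBe iuDCe iwDCe iDADBe iDADCe nAe nBe nCe : ℝ)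
    (h1v : (2*rr - 2*q)*(p - rr) + (2*rr - 2*p)*(q - rr) = iuDAe) (h2v : (2*rr - 2*q)*(rr - p) + (2*rr - 2*p)*(rv - p) = ivDAe) (h3v : (2*rr - 2*q)*(rv - q) + (2*rr - 2*p)*(rr - q) = iwDAe)
    (h4v : (2*rr - 2*rv)*(rr - p) + (2*rr - 2*p)*(q - p) = iuDBe) (h5v : (2*rr - 2*rv)*(p - rr) + (2*rr - 2*p)*(rv - rr) = ivDBe)
    (h6v : (2*rr - 2*rv)*(rr - q) + (2*rr - 2*q)*(p - q) = iuDCe) (h7v : (2*rr - 2*rv)*(q - rr) + (2*rr - 2*q)*(rv - rr) = iwDCe)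
    (h8v : (2*rr - 2*rv)*(2*rr - 2*q)*(2*p - 2*rr) + (2*rr - 2*q)*(2*rr - 2*p)*(rv - rr - q + p) + (2*rr - 2*rv)*(2*rr - 2*p)*(q - rv - rr + p) + (2*rr - 2*p)*(2*rr - 2*p)*(rr - rv - q + p) = iDADBe) (h9v : (2*rr - 2*rv)*(2*rr - 2*q)*(p - rv - rr + q) + (2*rr - 2*q)*(2*rr - 2*q)*(rr - rv - p + q) + (2*rr - 2*rv)*(2*rr - 2*p)*(2*q - 2*rr) + (2*rr - 2*q)*(2*rr - 2*p)*(rv - rr - p + q) = iDADCe)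
    (h10v : (2*rr - 2*q)^2*(2*rr - 2*p) + 2*(2*rr - 2*q)*(2*rr - 2*p)*(rr + rv - p - q) + (2*rr - 2*p)^2*(2*rr - 2*q) = nAe) (h11v : (2*rr - 2*rv)^2*(2*rr - 2*p) + 2*(2*rr - 2*rv)*(2*rr - 2*p)*(rr + q - rv - p) + (2*rr - 2*p)^2*(2*rr - 2*rv) = nBe) (h12v : (2*rr - 2*rv)^2*(2*rr - 2*q) + 2*(2*rr - 2*rv)*(2*rr - 2*q)*(rr + p - rv - q) + (2*rr - 2*q)^2*(2*rr - 2*rv) = nCe)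
    (hnA : nAe ≠ 0) (hnB : nBe ≠ 0) (hnC : nCe ≠ 0) :
    (2*rr - 2*(p - (2 * ivDBe / nBe) * iuDBe)) * (2*rr - 2*(q - (2 * iuDAe / nAe) * iwDAe - (2 * iwDCe / nCe) * iuDCe + (2 * iuDAe / nAe) * (2 * iwDCe / nCe) * iDADCe)) = (2*rr - 2*(q - (2 * iwDCe / nCe) * iuDCe)) * (2*rr - 2*(p - (2 * iuDAe / nAe) * ivDAe - (2 * ivDBe / nBe) * iuDBe + (2 * iuDAe / nAe) * (2 * ivDBe / nBe) * iDADBe)) := by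
  field_simp [hnA, hnB, hnC]
  rw [← h1v, ← h2v, ← h3v, ← h4v, ← h5v, ← h6v, ← h7v, ← h8v, ← h9v, ← h10v, ← h11v, ← h12v]
  ring

set_option maxHeartbeats 3000000

theorem stmt2    (A B C : Pt) (hABC : AffineIndependent ℝ ![A, B, C])
    (ω : EuclideanGeometry.Sphere Pt) (hr : 0 < ω.radius)
    (hA : A ∈ ω) (hB : B ∈ ω) (hC : C ∈ ω)
    (L : Pt) (hL : L = lemoinePoint A B C)
    (A' : Pt) (hA'w : A' ∈ ω) (hA'ne : A' ≠ A) (hA'col : Collinear ℝ ({A, L, A'} : Set Pt))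
    (B' : Pt) (hB'w : B' ∈ ω) (hB'ne : B' ≠ B) (hB'col : Collinear ℝ ({B, L, B'} : Set Pt))
    (C' : Pt) (hC'w : C' ∈ ω) (hC'ne : C' ≠ C) (hC'col : Collinear ℝ ({C, L, C'} : Set Pt))
    : dist A B' * dist A' C' = dist A C' * dist A' B' := by
  have hAB : A ≠ B := fun h => (by decide : ¬((0:Fin 3) = 1)) (hABC.injective (by simpa using h))
  have hAC : A ≠ C := fun h => (by decide : ¬((0:Fin 3) = 2)) (hABC.injective (by simpa using h))
  have hBC : B ≠ C := fun h => (by decide : ¬((1:Fin 3) = 2)) (hABC.injective (by simpa using h))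
  have hncol : ¬ Collinear ℝ ({A, B, C} : Set Pt) := affineIndependent_iff_not_collinear_set.mp hABC
  have hncolB : ¬ Collinear ℝ ({B, A, C} : Set Pt) := by
    rw [show ({B, A, C} : Set Pt) = {A, B, C} from by ext x; simp; tauto]; exact hncol
  have hncolC : ¬ Collinear ℝ ({C, A, B} : Set Pt) := by
    rw [show ({C, A, B} : Set Pt) = {A, B, C} from by ext x; simp; tauto]; exact hncol
  obtain ⟨O, hOd⟩ : ∃ x : Pt, ω.center = x := ⟨_, rfl⟩
  obtain ⟨rr, hrrd⟩ : ∃ x : ℝ, ω.radius ^ 2 = x := ⟨_, rfl⟩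
  obtain ⟨u, hud⟩ : ∃ x : Pt, A - O = x := ⟨_, rfl⟩
  obtain ⟨v, hvd⟩ : ∃ x : Pt, B - O = x := ⟨_, rfl⟩
  obtain ⟨w, hwd⟩ : ∃ x : Pt, C - O = x := ⟨_, rfl⟩
  have hAr : ‖u‖ = ω.radius := by
    rw [← hud, ← hOd, ← dist_eq_norm]; exact EuclideanGeometry.mem_sphere.mp hA
  have hBr : ‖v‖ = ω.radius := by
    rw [← hvd, ← hOd, ← dist_eq_norm]; exact EuclideanGeometry.mem_sphere.mp hB
  have hCr : ‖w‖ = ω.radius := by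
    rw [← hwd, ← hOd, ← dist_eq_norm]; exact EuclideanGeometry.mem_sphere.mp hC
  have hA'r : ‖A' - O‖ = ω.radius := by
    rw [← hOd, ← dist_eq_norm]; exact EuclideanGeometry.mem_sphere.mp hA'w
  have hB'r : ‖B' - O‖ = ω.radius := by
    rw [← hOd, ← dist_eq_norm]; exact EuclideanGeometry.mem_sphere.mp hB'w
  have hC'r : ‖C' - O‖ = ω.radius := by
    rw [← hOd, ← dist_eq_norm]; exact EuclideanGeometry.mem_sphere.mp hC'w
  have hAr' : ‖A - O‖ = ω.radius := by rw [hud]; exact hAr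
  have hBr' : ‖B - O‖ = ω.radius := by rw [hvd]; exact hBr
  have hCr' : ‖C - O‖ = ω.radius := by rw [hwd]; exact hCr
  obtain ⟨p, hpd⟩ : ∃ x : ℝ, ⟪u, v⟫ = x := ⟨_, rfl⟩
  obtain ⟨q, hqd⟩ : ∃ x : ℝ, ⟪u, w⟫ = x := ⟨_, rfl⟩
  obtain ⟨rv, hrvd⟩ : ∃ x : ℝ, ⟪v, w⟫ = x := ⟨_, rfl⟩
  have hIuu : ⟪u, u⟫ = rr := by rw [real_inner_self_eq_norm_sq, hAr, hrrd]
  have hIvv : ⟪v, v⟫ = rr := by rw [real_inner_self_eq_norm_sq, hBr, hrrd]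
  have hIww : ⟪w, w⟫ = rr := by rw [real_inner_self_eq_norm_sq, hCr, hrrd]
  have hIA'A' : ⟪A' - O, A' - O⟫ = rr := by rw [real_inner_self_eq_norm_sq, hA'r, hrrd]
  have hIB'B' : ⟪B' - O, B' - O⟫ = rr := by rw [real_inner_self_eq_norm_sq, hB'r, hrrd]
  have hIC'C' : ⟪C' - O, C' - O⟫ = rr := by rw [real_inner_self_eq_norm_sq, hC'r, hrrd]
  have hIuv : ⟪u, v⟫ = p := hpd
  have hIvu : ⟪v, u⟫ = p := by rw [real_inner_comm]; exact hpd
  have hIuw : ⟪u, w⟫ = q := hqd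
  have hIwu : ⟪w, u⟫ = q := by rw [real_inner_comm]; exact hqd
  have hIvw : ⟪v, w⟫ = rv := hrvd
  have hIwv : ⟪w, v⟫ = rv := by rw [real_inner_comm]; exact hrvd
  have ha2 : dist B C ^ 2 = 2*rr - 2*rv := by
    rw [dist_eq_norm, show B - C = (B - O) - (C - O) from by abel, hvd, hwd, norm_sub_sq_real,
      ← real_inner_self_eq_norm_sq, ← real_inner_self_eq_norm_sq, hIvv, hIww, hIvw]
    ring
  have hb2 : dist C A ^ 2 = 2*rr - 2*q := by
    rw [dist_eq_norm, show C - A = (C - O) - (A - O) from by abel, hwd, hud, norm_sub_sq_real,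
      ← real_inner_self_eq_norm_sq, ← real_inner_self_eq_norm_sq, hIww, hIuu, hIwu]
    ring
  have hc2 : dist A B ^ 2 = 2*rr - 2*p := by
    rw [dist_eq_norm, show A - B = (A - O) - (B - O) from by abel, hud, hvd, norm_sub_sq_real,
      ← real_inner_self_eq_norm_sq, ← real_inner_self_eq_norm_sq, hIuu, hIvv, hIuv]
    ring
  have hspos : (0:ℝ) < 2*rr - 2*rv + (2*rr - 2*q) + (2*rr - 2*p) := by
    rw [← ha2, ← hb2, ← hc2]
    exact add_pos (add_pos (pow_pos (dist_pos.mpr hBC) 2) (pow_pos (dist_pos.mpr hAC.symm) 2))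
      (pow_pos (dist_pos.mpr hAB) 2)
  have hs : (2*rr - 2*rv + (2*rr - 2*q) + (2*rr - 2*p) : ℝ) ≠ 0 := ne_of_gt hspos
  have ha2ne : (2*rr - 2*rv : ℝ) ≠ 0 := by rw [← ha2]; exact pow_ne_zero 2 (dist_ne_zero.mpr hBC)
  have hb2ne : (2*rr - 2*q : ℝ) ≠ 0 := by rw [← hb2]; exact pow_ne_zero 2 (dist_ne_zero.mpr hAC.symm)
  obtain ⟨DA, hDAd⟩ : ∃ d : Pt, (2*rr - 2*q) • (v - u) + (2*rr - 2*p) • (w - u) = d := ⟨_, rfl⟩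
  have hDAne : DA ≠ 0 := by
    rw [← hDAd, ← hud, ← hvd, ← hwd,
      show (B - O) - (A - O) = B - A from by abel,
      show (C - O) - (A - O) = C - A from by abel]
    exact Dne' hncol hb2ne
  have hDA : (2*rr - 2*rv + (2*rr - 2*q) + (2*rr - 2*p)) • (L - A) = DA := by
    rw [← hDAd, ← hud, ← hvd, ← hwd, hL]
    simp only [lemoinePoint]
    rw [ha2, hb2, hc2]
    match_scalars <;> (field_simp [show (rr - rv + (rr - q) + (rr - p)) ≠ 0 from by intro h0; apply hs; linarith]; try ring)

  obtain ⟨DB, hDBd⟩ : ∃ d : Pt, (2*rr - 2*rv) • (u - v) + (2*rr - 2*p) • (w - v) = d := ⟨_, rfl⟩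
  have hDBne : DB ≠ 0 := by
    rw [← hDBd, ← hud, ← hvd, ← hwd,
      show (A - O) - (B - O) = A - B from by abel,
      show (C - O) - (B - O) = C - B from by abel]
    exact Dne' hncolB ha2ne
  have hDB : (2*rr - 2*rv + (2*rr - 2*q) + (2*rr - 2*p)) • (L - B) = DB := by
    rw [← hDBd, ← hud, ← hvd, ← hwd, hL]
    simp only [lemoinePoint]
    rw [ha2, hb2, hc2]
    match_scalars <;> (field_simp [show (rr - rv + (rr - q) + (rr - p)) ≠ 0 from by intro h0; apply hs; linarith]; try ring)

  obtain ⟨DC, hDCd⟩ : ∃ d : Pt, (2*rr - 2*rv) • (u - w) + (2*rr - 2*q) • (v - w) = d := ⟨_, rfl⟩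
  have hDCne : DC ≠ 0 := by
    rw [← hDCd, ← hud, ← hvd, ← hwd,
      show (A - O) - (C - O) = A - C from by abel,
      show (B - O) - (C - O) = B - C from by abel]
    exact Dne' hncolC ha2ne
  have hDC : (2*rr - 2*rv + (2*rr - 2*q) + (2*rr - 2*p)) • (L - C) = DC := by
    rw [← hDCd, ← hud, ← hvd, ← hwd, hL]
    simp only [lemoinePoint]
    rw [ha2, hb2, hc2]
    match_scalars <;> (field_simp [show (rr - rv + (rr - q) + (rr - p)) ≠ 0 from by intro h0; apply hs; linarith]; try ring)

  have hA'O := second_point hAr' hA'r hDAne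
    ⟨(2*rr - 2*rv + (2*rr - 2*q) + (2*rr - 2*p))⁻¹, inv_ne_zero hs,
      ((inv_smul_eq_iff₀ hs).mpr hDA.symm).symm⟩ hA'col hA'ne
  have hB'O := second_point hBr' hB'r hDBne
    ⟨(2*rr - 2*rv + (2*rr - 2*q) + (2*rr - 2*p))⁻¹, inv_ne_zero hs,
      ((inv_smul_eq_iff₀ hs).mpr hDB.symm).symm⟩ hB'col hB'ne
  have hC'O := second_point hCr' hC'r hDCne
    ⟨(2*rr - 2*rv + (2*rr - 2*q) + (2*rr - 2*p))⁻¹, inv_ne_zero hs,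
      ((inv_smul_eq_iff₀ hs).mpr hDC.symm).symm⟩ hC'col hC'ne
  rw [hud] at hA'O
  rw [hvd] at hB'O
  rw [hwd] at hC'O
  obtain ⟨iuDAe, hiuDAe⟩ : ∃ x : ℝ, (2*rr - 2*q)*(p - rr) + (2*rr - 2*p)*(q - rr) = x := ⟨_, rfl⟩
  obtain ⟨ivDAe, hivDAe⟩ : ∃ x : ℝ, (2*rr - 2*q)*(rr - p) + (2*rr - 2*p)*(rv - p) = x := ⟨_, rfl⟩
  obtain ⟨iwDAe, hiwDAe⟩ : ∃ x : ℝ, (2*rr - 2*q)*(rv - q) + (2*rr - 2*p)*(rr - q) = x := ⟨_, rfl⟩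
  obtain ⟨iuDBe, hiuDBe⟩ : ∃ x : ℝ, (2*rr - 2*rv)*(rr - p) + (2*rr - 2*p)*(q - p) = x := ⟨_, rfl⟩
  obtain ⟨ivDBe, hivDBe⟩ : ∃ x : ℝ, (2*rr - 2*rv)*(p - rr) + (2*rr - 2*p)*(rv - rr) = x := ⟨_, rfl⟩
  obtain ⟨iuDCe, hiuDCe⟩ : ∃ x : ℝ, (2*rr - 2*rv)*(rr - q) + (2*rr - 2*q)*(p - q) = x := ⟨_, rfl⟩
  obtain ⟨iwDCe, hiwDCe⟩ : ∃ x : ℝ, (2*rr - 2*rv)*(q - rr) + (2*rr - 2*q)*(rv - rr) = x := ⟨_, rfl⟩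
  obtain ⟨iDADBe, hiDADBe⟩ : ∃ x : ℝ, (2*rr - 2*rv)*(2*rr - 2*q)*(2*p - 2*rr) + (2*rr - 2*q)*(2*rr - 2*p)*(rv - rr - q + p) + (2*rr - 2*rv)*(2*rr - 2*p)*(q - rv - rr + p) + (2*rr - 2*p)*(2*rr - 2*p)*(rr - rv - q + p) = x := ⟨_, rfl⟩
  obtain ⟨iDADCe, hiDADCe⟩ : ∃ x : ℝ, (2*rr - 2*rv)*(2*rr - 2*q)*(p - rv - rr + q) + (2*rr - 2*q)*(2*rr - 2*q)*(rr - rv - p + q) + (2*rr - 2*rv)*(2*rr - 2*p)*(2*q - 2*rr) + (2*rr - 2*q)*(2*rr - 2*p)*(rv - rr - p + q) = x := ⟨_, rfl⟩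
  obtain ⟨nAe, hnAe⟩ : ∃ x : ℝ, (2*rr - 2*q)^2*(2*rr - 2*p) + 2*(2*rr - 2*q)*(2*rr - 2*p)*(rr + rv - p - q) + (2*rr - 2*p)^2*(2*rr - 2*q) = x := ⟨_, rfl⟩
  obtain ⟨nBe, hnBe⟩ : ∃ x : ℝ, (2*rr - 2*rv)^2*(2*rr - 2*p) + 2*(2*rr - 2*rv)*(2*rr - 2*p)*(rr + q - rv - p) + (2*rr - 2*p)^2*(2*rr - 2*rv) = x := ⟨_, rfl⟩
  obtain ⟨nCe, hnCe⟩ : ∃ x : ℝ, (2*rr - 2*rv)^2*(2*rr - 2*q) + 2*(2*rr - 2*rv)*(2*rr - 2*q)*(rr + p - rv - q) + (2*rr - 2*q)^2*(2*rr - 2*rv) = x := ⟨_, rfl⟩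
  have hIuDA : ⟪u, DA⟫ = iuDAe := by
    rw [← hiuDAe, ← hDAd]
    simp only [inner_add_left, inner_add_right, inner_sub_left, inner_sub_right,
      real_inner_smul_left, real_inner_smul_right, hIuu, hIvv, hIww, hIuv, hIvu, hIuw, hIwu, hIvw, hIwv]
  have hIvDA : ⟪DA, v⟫ = ivDAe := by
    rw [← hivDAe, ← hDAd]
    simp only [inner_add_left, inner_add_right, inner_sub_left, inner_sub_right,
      real_inner_smul_left, real_inner_smul_right, hIuu, hIvv, hIww, hIuv, hIvu, hIuw, hIwu, hIvw, hIwv]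
  have hIwDA : ⟪DA, w⟫ = iwDAe := by
    rw [← hiwDAe, ← hDAd]
    simp only [inner_add_left, inner_add_right, inner_sub_left, inner_sub_right,
      real_inner_smul_left, real_inner_smul_right, hIuu, hIvv, hIww, hIuv, hIvu, hIuw, hIwu, hIvw, hIwv]
  have hIuDB : ⟪u, DB⟫ = iuDBe := by
    rw [← hiuDBe, ← hDBd]
    simp only [inner_add_left, inner_add_right, inner_sub_left, inner_sub_right,
      real_inner_smul_left, real_inner_smul_right, hIuu, hIvv, hIww, hIuv, hIvu, hIuw, hIwu, hIvw, hIwv]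
  have hIvDB : ⟪v, DB⟫ = ivDBe := by
    rw [← hivDBe, ← hDBd]
    simp only [inner_add_left, inner_add_right, inner_sub_left, inner_sub_right,
      real_inner_smul_left, real_inner_smul_right, hIuu, hIvv, hIww, hIuv, hIvu, hIuw, hIwu, hIvw, hIwv]
  have hIuDC : ⟪u, DC⟫ = iuDCe := by
    rw [← hiuDCe, ← hDCd]
    simp only [inner_add_left, inner_add_right, inner_sub_left, inner_sub_right,
      real_inner_smul_left, real_inner_smul_right, hIuu, hIvv, hIww, hIuv, hIvu, hIuw, hIwu, hIvw, hIwv]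
  have hIwDC : ⟪w, DC⟫ = iwDCe := by
    rw [← hiwDCe, ← hDCd]
    simp only [inner_add_left, inner_add_right, inner_sub_left, inner_sub_right,
      real_inner_smul_left, real_inner_smul_right, hIuu, hIvv, hIww, hIuv, hIvu, hIuw, hIwu, hIvw, hIwv]
  have hIDADB : ⟪DA, DB⟫ = iDADBe := by
    rw [← hiDADBe, ← hDAd, ← hDBd]
    simp only [inner_add_left, inner_add_right, inner_sub_left, inner_sub_right,
      real_inner_smul_left, real_inner_smul_right, hIuu, hIvv, hIww, hIuv, hIvu, hIuw, hIwu, hIvw, hIwv]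
    ring
  have hIDADC : ⟪DA, DC⟫ = iDADCe := by
    rw [← hiDADCe, ← hDAd, ← hDCd]
    simp only [inner_add_left, inner_add_right, inner_sub_left, inner_sub_right,
      real_inner_smul_left, real_inner_smul_right, hIuu, hIvv, hIww, hIuv, hIvu, hIuw, hIwu, hIvw, hIwv]
    ring
  have hnAv : ⟪DA, DA⟫ = nAe := by
    rw [← hnAe, ← hDAd]
    simp only [inner_add_left, inner_add_right, inner_sub_left, inner_sub_right,
      real_inner_smul_left, real_inner_smul_right, hIuu, hIvv, hIww, hIuv, hIvu, hIuw, hIwu, hIvw, hIwv]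
    ring
  have hnBv : ⟪DB, DB⟫ = nBe := by
    rw [← hnBe, ← hDBd]
    simp only [inner_add_left, inner_add_right, inner_sub_left, inner_sub_right,
      real_inner_smul_left, real_inner_smul_right, hIuu, hIvv, hIww, hIuv, hIvu, hIuw, hIwu, hIvw, hIwv]
    ring
  have hnCv : ⟪DC, DC⟫ = nCe := by
    rw [← hnCe, ← hDCd]
    simp only [inner_add_left, inner_add_right, inner_sub_left, inner_sub_right,
      real_inner_smul_left, real_inner_smul_right, hIuu, hIvv, hIww, hIuv, hIvu, hIuw, hIwu, hIvw, hIwv]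
    ring

  have hnA' : nAe ≠ 0 := hnAv ▸ inner_self_ne_zero.mpr hDAne
  have hnB' : nBe ≠ 0 := hnBv ▸ inner_self_ne_zero.mpr hDBne
  have hnC' : nCe ≠ 0 := hnCv ▸ inner_self_ne_zero.mpr hDCne
  have hIuB' : ⟪u, B' - O⟫ = (p - (2 * ivDBe / nBe) * iuDBe) := by
    rw [hB'O]
    simp only [inner_sub_right, real_inner_smul_right]
    rw [hIuv, hIuDB, hIvDB, hnBv]
  have hIuC' : ⟪u, C' - O⟫ = (q - (2 * iwDCe / nCe) * iuDCe) := by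
    rw [hC'O]
    simp only [inner_sub_right, real_inner_smul_right]
    rw [hIuw, hIuDC, hIwDC, hnCv]
  have hIA'B' : ⟪A' - O, B' - O⟫ = (p - (2 * iuDAe / nAe) * ivDAe - (2 * ivDBe / nBe) * iuDBe + (2 * iuDAe / nAe) * (2 * ivDBe / nBe) * iDADBe) := by
    rw [hA'O, hB'O]
    simp only [inner_sub_left, inner_sub_right, real_inner_smul_left, real_inner_smul_right]
    rw [hIuv, hIuDA, hIvDA, hnAv, hIuDB, hIvDB, hnBv, hIDADB]
    ring
  have hIA'C' : ⟪A' - O, C' - O⟫ = (q - (2 * iuDAe / nAe) * iwDAe - (2 * iwDCe / nCe) * iuDCe + (2 * iuDAe / nAe) * (2 * iwDCe / nCe) * iDADCe) := by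
    rw [hA'O, hC'O]
    simp only [inner_sub_left, inner_sub_right, real_inner_smul_left, real_inner_smul_right]
    rw [hIuw, hIuDA, hIwDA, hnAv, hIuDC, hIwDC, hnCv, hIDADC]
    ring
  have hAB'sq : dist A B' ^ 2 = 2*rr - 2*(p - (2 * ivDBe / nBe) * iuDBe) := by
    rw [dist_eq_norm, show A - B' = (A - O) - (B' - O) from by abel, hud, norm_sub_sq_real,
      ← real_inner_self_eq_norm_sq, ← real_inner_self_eq_norm_sq, hIuu, hIB'B', hIuB']
    ring
  have hAC'sq : dist A C' ^ 2 = 2*rr - 2*(q - (2 * iwDCe / nCe) * iuDCe) := by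
    rw [dist_eq_norm, show A - C' = (A - O) - (C' - O) from by abel, hud, norm_sub_sq_real,
      ← real_inner_self_eq_norm_sq, ← real_inner_self_eq_norm_sq, hIuu, hIC'C', hIuC']
    ring
  have hA'B'sq : dist A' B' ^ 2 = 2*rr - 2*(p - (2 * iuDAe / nAe) * ivDAe - (2 * ivDBe / nBe) * iuDBe + (2 * iuDAe / nAe) * (2 * ivDBe / nBe) * iDADBe) := by
    rw [dist_eq_norm, show A' - B' = (A' - O) - (B' - O) from by abel, norm_sub_sq_real,
      ← real_inner_self_eq_norm_sq, ← real_inner_self_eq_norm_sq, hIA'A', hIB'B', hIA'B']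
    ring
  have hA'C'sq : dist A' C' ^ 2 = 2*rr - 2*(q - (2 * iuDAe / nAe) * iwDAe - (2 * iwDCe / nCe) * iuDCe + (2 * iuDAe / nAe) * (2 * iwDCe / nCe) * iDADCe) := by
    rw [dist_eq_norm, show A' - C' = (A' - O) - (C' - O) from by abel, norm_sub_sq_real,
      ← real_inner_self_eq_norm_sq, ← real_inner_self_eq_norm_sq, hIA'A', hIC'C', hIA'C']
    ring
  have key : (dist A B' * dist A' C') ^ 2 = (dist A C' * dist A' B') ^ 2 := by
    rw [mul_pow, mul_pow, hAB'sq, hA'C'sq, hAC'sq, hA'B'sq]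
    exact key_identity p q rv rr iuDAe ivDAe iwDAe iuDBe ivDBe iuDCe iwDCe iDADBe iDADCe
      nAe nBe nCe hiuDAe hivDAe hiwDAe hiuDBe hivDBe hiuDCe hiwDCe hiDADBe hiDADCe
      hnAe hnBe hnCe hnA' hnB' hnC'
  have h1 : 0 ≤ dist A B' * dist A' C' := mul_nonneg dist_nonneg dist_nonneg
  have h2 : 0 ≤ dist A C' * dist A' B' := mul_nonneg dist_nonneg dist_nonneg
  have h3 : (dist A B' * dist A' C' - dist A C' * dist A' B') *
      (dist A B' * dist A' C' + dist A C' * dist A' B') = 0 := by linear_combination key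
  rcases mul_eq_zero.mp h3 with h | h
  · exact sub_eq_zero.mp h
  · have e1 : dist A B' * dist A' C' = 0 := by linarith
    have e2 : dist A C' * dist A' B' = 0 := by linarith
    rw [e1, e2]
end
end

section
/- Vertex A has equal power with respect to the circles ω₂ and ω₃; that is, AB_a · AB_c = AC_a · AC_b, where B_a, B_c are the intersections of ω₂ with line CA, and C_a, C_b are the intersections of ω₃ with line AB. -/
open EuclideanGeometry RealInnerProductSpace

noncomputable section

private lemma lemoine_symm (A B C : Pt) : lemoinePoint A C B = lemoinePoint A B C := by
  simp only [lemoinePoint, dist_comm]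
  module

set_option maxHeartbeats 1000000 in
lemma key (A B C O B' c₂ : Pt) (r r₂ : ℝ) (hr : 0 < r)
    (hnc : ¬ Collinear ℝ ({A, B, C} : Set Pt))
    (hA : dist A O = r) (hB : dist B O = r) (hC : dist C O = r) (hB'w : dist B' O = r)
    (hB'ne : B' ≠ B)
    (hcol : Collinear ℝ ({B, lemoinePoint A B C, B'} : Set Pt))
    (hctr : Collinear ℝ ({c₂, O, B'} : Set Pt))
    (hBc2 : dist B' c₂ = r₂) (hLc2 : dist (lemoinePoint A B C) c₂ = r₂) :
    dist A c₂ ^ 2 - r₂ ^ 2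
      = dist C A ^ 2 * dist A B ^ 2
        / (2 * (dist B C ^ 2 + dist C A ^ 2 + dist A B ^ 2)) := by
  set a := dist B C with hadef
  set b := dist C A with hbdef
  set c := dist A B with hcdef
  set L := lemoinePoint A B C with hLdef
  -- distinctness and positivity
  have hAB : A ≠ B := by
    rintro rfl; exact hnc (by simpa using collinear_pair ℝ A C)
  have hBC : B ≠ C := by
    rintro rfl; exact hnc (by simpa [Set.insert_comm] using collinear_pair ℝ A B)
  have hCA : C ≠ A := by
    rintro rfl; exact hnc (by simpa [Set.insert_comm, Set.pair_comm] using collinear_pair ℝ C B)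
  have ha : 0 < a := dist_pos.2 hBC
  have hb : 0 < b := dist_pos.2 hCA
  have hc : 0 < c := dist_pos.2 hAB
  have hS : (0:ℝ) < a ^ 2 + b ^ 2 + c ^ 2 := by positivity
  have hQpos : (0:ℝ) < 2 * a ^ 2 + 2 * c ^ 2 - b ^ 2 := by
    have htri : b < a + c := by
      rcases lt_or_eq_of_le (dist_triangle C B A) with h' | h'
      · simpa [hadef, hbdef, hcdef, dist_comm B C, dist_comm A B] using h'
      · exact absurd ((dist_add_dist_eq_iff.1 h'.symm).collinear.subset
          (by intro x hx; simp at hx ⊢; tauto)) hnc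
    nlinarith [sq_nonneg (a - c)]
  have hQ' : 2 * (a ^ 2 + c ^ 2) - b ^ 2 ≠ 0 := by linarith
  -- basic inner products
  have iu : ⟪A - O, A - O⟫ = r ^ 2 := by
    rw [real_inner_self_eq_norm_sq, ← dist_eq_norm, hA]
  have iv : ⟪B - O, B - O⟫ = r ^ 2 := by
    rw [real_inner_self_eq_norm_sq, ← dist_eq_norm, hB]
  have iw : ⟪C - O, C - O⟫ = r ^ 2 := by
    rw [real_inner_self_eq_norm_sq, ← dist_eq_norm, hC]
  have ib' : ⟪B' - O, B' - O⟫ = r ^ 2 := by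
    rw [real_inner_self_eq_norm_sq, ← dist_eq_norm, hB'w]
  have cross : ∀ X Y : Pt, dist X O = r → dist Y O = r →
      ⟪X - O, Y - O⟫ = r ^ 2 - dist X Y ^ 2 / 2 := by
    intro X Y hX hY
    have h := norm_sub_sq_real (X - O) (Y - O)
    rw [show (X - O) - (Y - O) = X - Y by abel, ← dist_eq_norm, ← dist_eq_norm, ← dist_eq_norm,
      hX, hY] at h
    linarith
  have iuv : ⟪A - O, B - O⟫ = r ^ 2 - c ^ 2 / 2 := cross A B hA hB
  have iuw : ⟪A - O, C - O⟫ = r ^ 2 - b ^ 2 / 2 := by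
    rw [cross A C hA hC, dist_comm A C, ← hbdef]
  have ivw : ⟪B - O, C - O⟫ = r ^ 2 - a ^ 2 / 2 := cross B C hB hC
  -- the Lemoine point as a combination
  have hl : ((a ^ 2 + b ^ 2 + c ^ 2) : ℝ) • (L - O) = a ^ 2 • (A - O) + b ^ 2 • (B - O) + c ^ 2 • (C - O) := by
    have h1 : (a ^ 2 + b ^ 2 + c ^ 2) * (a ^ 2 / (a ^ 2 + b ^ 2 + c ^ 2)) = a ^ 2 := by field_simp
    have h2 : (a ^ 2 + b ^ 2 + c ^ 2) * (b ^ 2 / (a ^ 2 + b ^ 2 + c ^ 2)) = b ^ 2 := by field_simp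
    have h3 : (a ^ 2 + b ^ 2 + c ^ 2) * (c ^ 2 / (a ^ 2 + b ^ 2 + c ^ 2)) = c ^ 2 := by field_simp
    have : ((a ^ 2 + b ^ 2 + c ^ 2) : ℝ) • L = ((a ^ 2 + b ^ 2 + c ^ 2) * (a ^ 2 / (a ^ 2 + b ^ 2 + c ^ 2))) • A + ((a ^ 2 + b ^ 2 + c ^ 2) * (b ^ 2 / (a ^ 2 + b ^ 2 + c ^ 2))) • B + ((a ^ 2 + b ^ 2 + c ^ 2) * (c ^ 2 / (a ^ 2 + b ^ 2 + c ^ 2))) • C := by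
      rw [hLdef, lemoinePoint, ← hadef, ← hbdef, ← hcdef]
      module
    rw [h1, h2, h3] at this
    rw [smul_sub, this]
    module
  have P1 : (a ^ 2 + b ^ 2 + c ^ 2) * ⟪A - O, L - O⟫ = (a ^ 2 + b ^ 2 + c ^ 2) * r ^ 2 - b ^ 2 * c ^ 2 := by
    have h := congrArg (fun x => ⟪A - O, x⟫) hl
    simp only [real_inner_smul_right, inner_add_right] at h
    rw [iu, iuv, iuw] at h
    rw [h]; ring
  have P2 : (a ^ 2 + b ^ 2 + c ^ 2) * ⟪B - O, L - O⟫ = (a ^ 2 + b ^ 2 + c ^ 2) * r ^ 2 - a ^ 2 * c ^ 2 := by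
    have h := congrArg (fun x => ⟪B - O, x⟫) hl
    simp only [real_inner_smul_right, inner_add_right] at h
    rw [real_inner_comm (A - O) (B - O), iuv, iv, ivw] at h
    rw [h]; ring
  have P3 : (a ^ 2 + b ^ 2 + c ^ 2) ^ 2 * ⟪L - O, L - O⟫ = (a ^ 2 + b ^ 2 + c ^ 2) ^ 2 * r ^ 2 - 3 * a ^ 2 * b ^ 2 * c ^ 2 := by
    have h : (a ^ 2 + b ^ 2 + c ^ 2) ^ 2 * ⟪L - O, L - O⟫ = ⟪((a ^ 2 + b ^ 2 + c ^ 2) : ℝ) • (L - O), ((a ^ 2 + b ^ 2 + c ^ 2) : ℝ) • (L - O)⟫ := by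
      rw [real_inner_smul_left, real_inner_smul_right]; ring
    rw [h, hl]
    simp only [inner_add_left, inner_add_right, real_inner_smul_left, real_inner_smul_right]
    rw [real_inner_comm (A - O) (B - O), real_inner_comm (A - O) (C - O),
      real_inner_comm (B - O) (C - O), iu, iv, iw, iuv, iuw, ivw]
    ring
  -- division-form values
  have hX : ⟪B - O, L - O⟫
      = ((a ^ 2 + b ^ 2 + c ^ 2) * r ^ 2 - a ^ 2 * c ^ 2) / (a ^ 2 + b ^ 2 + c ^ 2) :=
    (eq_div_iff hS.ne').2 (by linear_combination P2)
  have hW : ⟪A - O, L - O⟫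
      = ((a ^ 2 + b ^ 2 + c ^ 2) * r ^ 2 - b ^ 2 * c ^ 2) / (a ^ 2 + b ^ 2 + c ^ 2) :=
    (eq_div_iff hS.ne').2 (by linear_combination P1)
  have hY : ⟪L - O, L - O⟫
      = ((a ^ 2 + b ^ 2 + c ^ 2) ^ 2 * r ^ 2 - 3 * a ^ 2 * b ^ 2 * c ^ 2)
        / (a ^ 2 + b ^ 2 + c ^ 2) ^ 2 :=
    (eq_div_iff (by positivity)).2 (by linear_combination P3)
  -- L ≠ B
  have hLB : L ≠ B := by
    intro h
    have h5 := hX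
    rw [h, iv, eq_div_iff hS.ne'] at h5
    have h6 : a ^ 2 * c ^ 2 = 0 := by linarith
    have : (0:ℝ) < a ^ 2 * c ^ 2 := by positivity
    linarith
  set u := A - O with hud
  set v := B - O with hvd
  set w := C - O with hwd
  set l := L - O with hld
  set p := B' - O with hpd
  set q := c₂ - O with hqd
  -- parametrize B' on line B L
  obtain ⟨τ, hτ0, hτe⟩ : ∃ τ : ℝ, τ ≠ 0 ∧ B' - B = τ • (L - B) := by
    obtain ⟨v, hv⟩ := (collinear_iff_of_mem (show B ∈ ({B, L, B'} : Set Pt) by simp)).1 hcol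
    obtain ⟨rl, hrl⟩ := hv L (by simp)
    obtain ⟨rb, hrb⟩ := hv B' (by simp)
    have hrl0 : rl ≠ 0 := by rintro rfl; simp at hrl; exact hLB hrl
    refine ⟨rb / rl, ?_, ?_⟩
    · intro h0
      have : rb = 0 := by
        field_simp at h0; simpa using h0
      apply hB'ne; rw [hrb, this]; simp
    · have hLv : L - B = rl • v := by simp [hrl, vadd_eq_add]
      rw [hLv, smul_smul, div_mul_cancel₀ _ hrl0]
      simp [hrb, vadd_eq_add]
  have hB'O : p = v + τ • (l - v) := by
    rw [hpd, hvd, hld, show (L - O) - (B - O) = L - B by abel, ← hτe]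
    abel
  -- parametrize c₂ on line O B'
  obtain ⟨t, hte⟩ : ∃ t : ℝ, q = t • p := by
    rw [hqd, hpd]
    obtain ⟨v, hv⟩ := (collinear_iff_of_mem (show O ∈ ({c₂, O, B'} : Set Pt) by simp)).1 hctr
    obtain ⟨rc, hrc⟩ := hv c₂ (by simp)
    obtain ⟨rb, hrb⟩ := hv B' (by simp)
    have hrb0 : rb ≠ 0 := by
      rintro rfl
      simp only [zero_smul, zero_vadd] at hrb
      rw [hrb] at hB'w
      simp at hB'w
      exact absurd hB'w (by linarith)
    refine ⟨rc / rb, ?_⟩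
    have hBv : B' - O = rb • v := by simp [hrb, vadd_eq_add]
    rw [hBv, smul_smul, div_mul_cancel₀ _ hrb0]
    simp [hrc, vadd_eq_add]
  -- equation E1 : B' on the circumcircle determines τ
  have e1 : r ^ 2 + 2 * τ * (⟪v, l⟫ - r ^ 2)
      + τ ^ 2 * (⟪l, l⟫ - 2 * ⟪v, l⟫ + r ^ 2) = r ^ 2 := by
    have h := ib'
    rw [hB'O] at h
    simp only [inner_add_left, inner_add_right, inner_sub_left, inner_sub_right,
      real_inner_smul_left, real_inner_smul_right] at h
    rw [real_inner_comm v l, iv] at h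
    linear_combination h
  have hτv : τ = 2 * (a ^ 2 + b ^ 2 + c ^ 2) / (2 * a ^ 2 + 2 * c ^ 2 - b ^ 2) := by
    have e1' := e1
    rw [hX, hY] at e1'
    have h' : τ * (a ^ 2 * c ^ 2) * ((2 * a ^ 2 + 2 * c ^ 2 - b ^ 2) * τ
        - 2 * (a ^ 2 + b ^ 2 + c ^ 2)) * (a ^ 2 + b ^ 2 + c ^ 2) ^ 2 = 0 := by
      field_simp at e1'
      linear_combination (a ^ 2 + b ^ 2 + c ^ 2) ^ 2 * e1'
    have h'' := (mul_eq_zero.1 h').resolve_right (pow_ne_zero 2 hS.ne')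
    have h2 := (mul_eq_zero.1 h'').resolve_left (mul_ne_zero hτ0 (by positivity))
    field_simp
    linarith
  -- inner products with p
  have hlp : ⟪l, p⟫ = ⟪v, l⟫ + τ * (⟪l, l⟫ - ⟪v, l⟫) := by
    rw [hB'O]
    simp only [inner_add_right, inner_sub_right, real_inner_smul_right]
    rw [real_inner_comm l v]
  have hup : ⟪u, p⟫ = ⟪u, v⟫ + τ * (⟪u, l⟫ - ⟪u, v⟫) := by
    rw [hB'O]
    simp only [inner_add_right, inner_sub_right, real_inner_smul_right]
  -- equation E2 : the tangent circle radius
  have e2 : r₂ ^ 2 = (1 - t) ^ 2 * r ^ 2 := by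
    have h : ⟪p - q, p - q⟫ = r₂ ^ 2 := by
      have hpq : p - q = B' - c₂ := by rw [hpd, hqd]; abel
      rw [hpq, real_inner_self_eq_norm_sq, ← dist_eq_norm, hBc2]
    rw [hte] at h
    simp only [inner_sub_left, inner_sub_right, real_inner_smul_left,
      real_inner_smul_right, ib'] at h
    linear_combination -h
  -- equation E3 : L on the tangent circle determines t
  have e3 : ⟪l, l⟫ - 2 * t * (⟪v, l⟫ + τ * (⟪l, l⟫ - ⟪v, l⟫))
      + t ^ 2 * r ^ 2 = r₂ ^ 2 := by
    have h : ⟪l - q, l - q⟫ = r₂ ^ 2 := by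
      have hpq : l - q = L - c₂ := by rw [hld, hqd]; abel
      rw [hpq, real_inner_self_eq_norm_sq, ← dist_eq_norm, hLc2]
    rw [hte] at h
    simp only [inner_sub_left, inner_sub_right, real_inner_smul_left,
      real_inner_smul_right] at h
    rw [real_inner_comm l p, hlp, ib'] at h
    linear_combination h
  have htv : t = (2 * a ^ 2 + 2 * c ^ 2 - b ^ 2) / (2 * (a ^ 2 + b ^ 2 + c ^ 2)) := by
    have e3' := e3
    rw [hX, hY, hτv, e2] at e3'
    have h' : (3 * a ^ 2 * b ^ 2 * c ^ 2) * (2 * (a ^ 2 + b ^ 2 + c ^ 2) * t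
        - (2 * a ^ 2 + 2 * c ^ 2 - b ^ 2)) * (a ^ 2 + b ^ 2 + c ^ 2) ^ 4 = 0 := by
      field_simp at e3'
      linear_combination (a ^ 2 + b ^ 2 + c ^ 2) ^ 4 * e3'
    have h'' := (mul_eq_zero.1 h').resolve_right (pow_ne_zero 4 hS.ne')
    have h2 := (mul_eq_zero.1 h'').resolve_left (by positivity)
    field_simp
    linarith
  -- final computation
  have h4 : dist A c₂ ^ 2 = r ^ 2
      - 2 * t * (⟪u, v⟫ + τ * (⟪u, l⟫ - ⟪u, v⟫))
      + t ^ 2 * r ^ 2 := by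
    have h : dist A c₂ ^ 2 = ⟪u - q, u - q⟫ := by
      have hpq : u - q = A - c₂ := by rw [hud, hqd]; abel
      rw [hpq, real_inner_self_eq_norm_sq, ← dist_eq_norm]
    rw [h, hte]
    simp only [inner_sub_left, inner_sub_right, real_inner_smul_left,
      real_inner_smul_right] at *
    rw [real_inner_comm u p, hup, ib', iu]
    ring
  rw [h4, e2, iuv, hW, hτv, htv]
  field_simp
  ring

private lemma power_lemma (s : EuclideanGeometry.Sphere Pt) (P X Y : Pt)
    (hX : X ∈ s) (hY : Y ∈ s) (hXY : X ≠ Y) (hXP : X ≠ P)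
    (hco : Collinear ℝ ({X, Y, P} : Set Pt)) :
    dist P X * dist P Y = |dist P s.center ^ 2 - s.radius ^ 2| := by
  obtain ⟨v, hv⟩ := (collinear_iff_of_mem (show P ∈ ({X, Y, P} : Set Pt) by simp)).1 hco
  obtain ⟨α, hα⟩ := hv X (by simp)
  obtain ⟨β, hβ⟩ := hv Y (by simp)
  have hα0 : α ≠ 0 := by rintro rfl; simp at hα; exact hXP hα
  have hk : Y -ᵥ P = (β / α) • (X -ᵥ P) := by
    have h1 : X -ᵥ P = α • v := by simp [hα, vadd_eq_add, vsub_eq_sub]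
    have h2 : Y -ᵥ P = β • v := by simp [hβ, vadd_eq_add, vsub_eq_sub]
    rw [h1, h2, smul_smul, div_mul_cancel₀ _ hα0]
  have hk1 : β / α ≠ 1 := by
    intro h1
    apply hXY
    rw [h1, one_smul] at hk
    exact (vsub_left_cancel hk).symm
  have h := mul_dist_eq_abs_sub_sq_dist
    (hco.mem_affineSpan_of_mem_of_ne (p₁ := X) (p₂ := Y) (p₃ := P) (by simp) (by simp) (by simp) hXY)
    (show dist X s.center = dist Y s.center by
      rw [EuclideanGeometry.mem_sphere.1 hX, EuclideanGeometry.mem_sphere.1 hY])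
  rw [EuclideanGeometry.mem_sphere.1 hY] at h
  rw [dist_comm P X, dist_comm P Y, h, abs_sub_comm]

theorem stmt4    (A B C : Pt) (hABC : AffineIndependent ℝ ![A, B, C])
    (ω : EuclideanGeometry.Sphere Pt) (hr : 0 < ω.radius)
    (hA : A ∈ ω) (hB : B ∈ ω) (hC : C ∈ ω)
    (L : Pt) (hL : L = lemoinePoint A B C)
    (B' : Pt) (hB'w : B' ∈ ω) (hB'ne : B' ≠ B) (hB'col : Collinear ℝ ({B, L, B'} : Set Pt))
    (C' : Pt) (hC'w : C' ∈ ω) (hC'ne : C' ≠ C) (hC'col : Collinear ℝ ({C, L, C'} : Set Pt))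
    (ω₂ : EuclideanGeometry.Sphere Pt) (hω₂1 : B' ∈ ω₂) (hω₂2 : L ∈ ω₂)
    (hω₂t : CircleTangentAt ω₂ ω B')
    (B_c B_a : Pt) (hB_cB_a : B_c ≠ B_a)
    (hB_cc : B_c ∈ ω₂) (hB_cl : B_c ∈ affineSpan ℝ ({C, A} : Set Pt))
    (hB_ac : B_a ∈ ω₂) (hB_al : B_a ∈ affineSpan ℝ ({C, A} : Set Pt))
    (ω₃ : EuclideanGeometry.Sphere Pt) (hω₃1 : C' ∈ ω₃) (hω₃2 : L ∈ ω₃)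
    (hω₃t : CircleTangentAt ω₃ ω C')
    (C_a C_b : Pt) (hC_aC_b : C_a ≠ C_b)
    (hC_ac : C_a ∈ ω₃) (hC_al : C_a ∈ affineSpan ℝ ({A, B} : Set Pt))
    (hC_bc : C_b ∈ ω₃) (hC_bl : C_b ∈ affineSpan ℝ ({A, B} : Set Pt))
    : dist A B_a * dist A B_c = dist A C_a * dist A C_b := by
  subst hL
  have hnc : ¬ Collinear ℝ ({A, B, C} : Set Pt) :=
    affineIndependent_iff_not_collinear_set.1 hABC
  have hsets : ({A, C, B} : Set Pt) = {A, B, C} := by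
    ext x; simp; tauto
  have hnc' : ¬ Collinear ℝ ({A, C, B} : Set Pt) := by rw [hsets]; exact hnc
  have key2 := key A B C ω.center B' ω₂.center ω.radius ω₂.radius hr hnc
    (EuclideanGeometry.mem_sphere.1 hA) (EuclideanGeometry.mem_sphere.1 hB)
    (EuclideanGeometry.mem_sphere.1 hC) (EuclideanGeometry.mem_sphere.1 hB'w)
    hB'ne hB'col hω₂t.2.2
    (EuclideanGeometry.mem_sphere.1 hω₂1) (EuclideanGeometry.mem_sphere.1 hω₂2)
  have hcol3 : Collinear ℝ ({C, lemoinePoint A C B, C'} : Set Pt) := by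
    rw [lemoine_symm]; exact hC'col
  have key3 := key A C B ω.center C' ω₃.center ω.radius ω₃.radius hr hnc'
    (EuclideanGeometry.mem_sphere.1 hA) (EuclideanGeometry.mem_sphere.1 hC)
    (EuclideanGeometry.mem_sphere.1 hB) (EuclideanGeometry.mem_sphere.1 hC'w)
    hC'ne hcol3 hω₃t.2.2
    (EuclideanGeometry.mem_sphere.1 hω₃1)
    (by rw [lemoine_symm]; exact EuclideanGeometry.mem_sphere.1 hω₃2)
  rw [show dist C B = dist B C from dist_comm C B, show dist B A = dist A B from dist_comm B A,
    show dist A C = dist C A from dist_comm A C] at key3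
  have hAB : A ≠ B := by
    rintro rfl; exact hnc (by simpa using collinear_pair ℝ A C)
  have hCA : C ≠ A := by
    rintro rfl; exact hnc (by simpa [Set.insert_comm, Set.pair_comm] using collinear_pair ℝ C B)
  have hb : 0 < dist C A := dist_pos.2 hCA
  have hc : 0 < dist A B := dist_pos.2 hAB
  have hvpos : 0 < dist C A ^ 2 * dist A B ^ 2
      / (2 * (dist B C ^ 2 + dist C A ^ 2 + dist A B ^ 2)) := by
    apply div_pos (mul_pos (pow_pos hb 2) (pow_pos hc 2))
    have := sq_nonneg (dist B C)
    nlinarith [pow_pos hb 2, pow_pos hc 2]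
  have key3' : dist A ω₃.center ^ 2 - ω₃.radius ^ 2
      = dist C A ^ 2 * dist A B ^ 2
        / (2 * (dist B C ^ 2 + dist C A ^ 2 + dist A B ^ 2)) := by
    rw [key3]; ring_nf
  -- A is not any of the four intersection points
  have hBaA : B_a ≠ A := by
    intro h; rw [h] at hB_ac
    rw [EuclideanGeometry.mem_sphere.1 hB_ac] at key2
    simp at key2; linarith
  have hBcA : B_c ≠ A := by
    intro h; rw [h] at hB_cc
    rw [EuclideanGeometry.mem_sphere.1 hB_cc] at key2
    simp at key2; linarith
  have hCaA : C_a ≠ A := by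
    intro h; rw [h] at hC_ac
    rw [EuclideanGeometry.mem_sphere.1 hC_ac] at key3'
    simp at key3'; linarith
  have hCbA : C_b ≠ A := by
    intro h; rw [h] at hC_bc
    rw [EuclideanGeometry.mem_sphere.1 hC_bc] at key3'
    simp at key3'; linarith
  -- collinearity of the chords with A
  have hcoB : Collinear ℝ ({B_a, B_c, A} : Set Pt) :=
    (collinear_insert_insert_of_mem_affineSpan_pair hB_al hB_cl).subset
      (by intro x hx; simp at hx ⊢; tauto)
  have hcoC : Collinear ℝ ({C_a, C_b, A} : Set Pt) :=
    (collinear_insert_insert_of_mem_affineSpan_pair hC_al hC_bl).subset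
      (by intro x hx; simp at hx ⊢; tauto)
  have h1 := power_lemma ω₂ A B_a B_c hB_ac hB_cc (Ne.symm hB_cB_a) hBaA hcoB
  have h2 := power_lemma ω₃ A C_a C_b hC_ac hC_bc hC_aC_b hCaA hcoC
  rw [h1, h2, key2, key3']
end
end

section
/- The line AL is the radical axis of the circles ω₂ and ω₃. -/
open EuclideanGeometry RealInnerProductSpace

noncomputable section

/-! ### Auxiliary lemmas -/

lemma dist_sq' (x y : Pt) : dist x y ^ 2 = (x 0 - y 0)^2 + (x 1 - y 1)^2 := by
  rw [EuclideanSpace.dist_eq, Real.sq_sqrt (by positivity)]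
  simp [Fin.sum_univ_two, Real.dist_eq, sq_abs]

lemma indep_helper (A B C : Pt) (h : ¬ Collinear ℝ ({A, B, C} : Set Pt)) (x y : ℝ)
    (hxy : x • (B - A) + y • (C - A) = 0) : x = 0 ∧ y = 0 := by
  by_cases hx : x = 0
  · subst hx
    simp at hxy
    rcases hxy with hy | hCA
    · exact ⟨rfl, hy⟩
    · exfalso
      apply h
      have : C = A := by rwa [sub_eq_zero] at hCA
      subst this
      apply (collinear_pair ℝ C B).subset
      intro z hz; simp at hz ⊢; tauto
  · exfalso
    apply h
    rw [collinear_iff_of_mem (show A ∈ ({A, B, C} : Set Pt) by simp)]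
    refine ⟨C - A, fun p hp => ?_⟩
    have hBA : B - A = (-y/x) • (C - A) := by
      have h2 : x • (B - A) = (-y) • (C - A) := by
        linear_combination (norm := module) hxy
      calc B - A = x⁻¹ • (x • (B - A)) := by rw [inv_smul_smul₀ hx]
        _ = x⁻¹ • ((-y) • (C - A)) := by rw [h2]
        _ = (-y/x) • (C - A) := by rw [smul_smul]; ring_nf
    simp at hp
    rcases hp with rfl | rfl | rfl
    · exact ⟨0, by simp⟩
    · refine ⟨-y / x, ?_⟩
      rw [vadd_eq_add, ← hBA]; abel
    · exact ⟨1, by simp⟩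

lemma master (α β γ : ℝ) (h : α + β + γ = 1) (X Y Z Q : Pt) :
    dist (α • X + β • Y + γ • Z) Q ^ 2 =
      α * dist X Q ^ 2 + β * dist Y Q ^ 2 + γ * dist Z Q ^ 2
      - (α * β * dist X Y ^ 2 + β * γ * dist Y Z ^ 2 + α * γ * dist X Z ^ 2) := by
  have hγ : γ = 1 - α - β := by linarith
  subst hγ
  simp only [dist_sq']
  simp only [PiLp.add_apply, PiLp.smul_apply, smul_eq_mul]
  ring

lemma coll_param (p q r : Pt) (h : Collinear ℝ ({p, q, r} : Set Pt)) (hqr : q ≠ r) :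
    ∃ t : ℝ, p = q + t • (r - q) := by
  rw [collinear_iff_of_mem (show q ∈ ({p, q, r} : Set Pt) by simp)] at h
  obtain ⟨v, hv⟩ := h
  obtain ⟨a, ha⟩ := hv p (by simp)
  obtain ⟨c, hc⟩ := hv r (by simp)
  have hc0 : c ≠ 0 := by
    rintro rfl; simp at hc; exact hqr hc.symm
  refine ⟨a / c, ?_⟩
  have : r - q = c • v := by rw [hc]; simp [vadd_eq_add]
  rw [this, ha]
  simp [vadd_eq_add, smul_smul, div_mul_cancel₀ _ hc0]
  abel

lemma span_pair_mem_iff (A L p : Pt) :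
    p ∈ affineSpan ℝ ({A, L} : Set Pt) ↔ ∃ r : ℝ, p = A + r • (L - A) := by
  have h : p = (p - A) +ᵥ A := by simp [vadd_eq_add]
  constructor
  · intro hp
    rw [h, vadd_left_mem_affineSpan_pair] at hp
    obtain ⟨r, hr⟩ := hp
    refine ⟨r, ?_⟩
    simp only [vsub_eq_sub] at hr
    rw [hr]; abel
  · rintro ⟨r, rfl⟩
    have h2 : A + r • (L - A) = (r • (L - A)) +ᵥ A := by simp [vadd_eq_add]; abel
    rw [h2, vadd_left_mem_affineSpan_pair]
    exact ⟨r, by simp [vsub_eq_sub]⟩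

lemma range_three (A B C : Pt) : Set.range ![A, B, C] = {A, B, C} := by
  ext x
  simp only [Set.mem_range, Set.mem_insert_iff, Set.mem_singleton_iff]
  constructor
  · rintro ⟨i, rfl⟩
    fin_cases i <;> simp
  · rintro (rfl|rfl|rfl)
    exacts [⟨0, rfl⟩, ⟨1, rfl⟩, ⟨2, rfl⟩]

/-- The main "branch" lemma about the tangent circle through `B'` and `L`. -/
lemma branch (ω ω₂ : EuclideanGeometry.Sphere Pt) (L B B' : Pt)
    (hr : 0 < ω.radius)
    (hB : B ∈ ω) (hB'w : B' ∈ ω) (hB'ne : B' ≠ B)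
    (hcol : Collinear ℝ ({B, L, B'} : Set Pt))
    (hLB : L ≠ B)
    (h21 : B' ∈ ω₂) (h22 : L ∈ ω₂) (ht : CircleTangentAt ω₂ ω B')
    (hPne : circlePower L ω ≠ 0) :
    ∃ u t : ℝ, t ≠ 0 ∧ B' = B + t • (L - B) ∧
      (1 - t) * dist L B ^ 2 = circlePower L ω ∧ u * t = 1 ∧
      ∀ p, p ∈ ω → circlePower p ω₂ = u * dist p B' ^ 2 := by
  have hRB : dist B ω.center = ω.radius := by rwa [EuclideanGeometry.mem_sphere] at hB
  have hRB' : dist B' ω.center = ω.radius := by rwa [EuclideanGeometry.mem_sphere] at hB'w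
  -- parametrize B'
  obtain ⟨t, hB't⟩ := coll_param B' B L
    (hcol.subset (by intro z hz; simp at hz ⊢; tauto)) hLB.symm
  have ht0 : t ≠ 0 := by
    rintro rfl; apply hB'ne; rw [hB't]; simp
  -- chord relation
  have key1 : t * ((1 - t) * dist L B ^ 2 - circlePower L ω) = 0 := by
    have e : dist B' ω.center ^ 2 = dist B ω.center ^ 2 := by rw [hRB, hRB']
    rw [hB't] at e
    simp only [circlePower]
    rw [show ω.radius ^ 2 = dist B ω.center ^ 2 by rw [hRB]]
    simp only [dist_sq', PiLp.add_apply, PiLp.smul_apply, PiLp.sub_apply, smul_eq_mul] at e ⊢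
    linear_combination -e
  have h1t : (1 - t) * dist L B ^ 2 = circlePower L ω := by
    rcases mul_eq_zero.mp key1 with h | h
    · exact absurd h ht0
    · linarith
  -- tangency parametrization
  have hOB' : ω.center ≠ B' := by
    intro h
    rw [← h] at hRB'
    simp at hRB'
    linarith
  obtain ⟨u, hO₂⟩ := coll_param ω₂.center ω.center B' ht.2.2 hOB'
  have hr₂ : ω₂.radius ^ 2 = dist B' ω₂.center ^ 2 := by
    rw [show dist B' ω₂.center = ω₂.radius by rwa [EuclideanGeometry.mem_sphere] at h21]
  -- power formula
  have hpow : ∀ p : Pt, circlePower p ω₂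
      = (1 - u) * (circlePower p ω) + u * dist p B' ^ 2 := by
    intro p
    have hB'R : dist B' ω.center ^ 2 = ω.radius ^ 2 := by rw [hRB']
    simp only [circlePower]
    rw [hr₂, hO₂]
    simp only [dist_sq', PiLp.add_apply, PiLp.smul_apply, PiLp.sub_apply, smul_eq_mul] at hB'R ⊢
    linear_combination (u - 1) * hB'R
  -- evaluate at L
  have hpowL2 : circlePower L ω₂ = 0 := by
    simp only [circlePower]
    rw [show dist L ω₂.center = ω₂.radius by rwa [EuclideanGeometry.mem_sphere] at h22]
    ring
  have hLB' : dist L B' ^ 2 = (1 - t)^2 * dist L B ^ 2 := by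
    rw [hB't]
    simp only [dist_sq', PiLp.add_apply, PiLp.smul_apply, PiLp.sub_apply, smul_eq_mul]
    ring
  have hut : u * t = 1 := by
    have h0 : 0 = (1 - u) * circlePower L ω + u * ((1 - t) * circlePower L ω) := by
      have := hpow L
      rw [hpowL2, hLB'] at this
      linear_combination this + u * (1-t) * h1t
    have : circlePower L ω * (1 - u * t) = 0 := by linear_combination -h0
    rcases mul_eq_zero.mp this with h | h
    · exact absurd h hPne
    · linarith
  refine ⟨u, t, ht0, hB't, h1t, hut, fun p hp => ?_⟩
  have hp0 : circlePower p ω = 0 := by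
    simp only [circlePower]
    rw [show dist p ω.center = ω.radius by rwa [EuclideanGeometry.mem_sphere] at hp]
    ring
  rw [hpow p, hp0]
  ring

/-- Final scalar computation. -/
lemma scalar_final (P m n D X Y b2 c2 u2 u3 t2 t3 : ℝ)
    (hm : m ≠ 0) (hn : n ≠ 0) (hP : P ≠ 0)
    (h1 : (1 - t2) * m = P) (h2 : (1 - t3) * n = P)
    (hu2 : u2 * t2 = 1) (hu3 : u3 * t3 = 1)
    (hc2 : c2 = D + m - 2*X) (hb2 : b2 = D + n - 2*Y)
    (hkey : P*(b2 - c2) = b2*m - c2*n) :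
    u2 * (D - 2*(1-t2)*X + (1-t2)^2*m) = u3 * (D - 2*(1-t3)*Y + (1-t3)^2*n) := by
  subst hc2 hb2
  have hmP : m - P ≠ 0 := by
    intro h
    have ht2' : t2 = 0 := by
      have : (1 - t2) * m = m := by linarith
      have := mul_right_cancel₀ hm (by linarith [this] : (1 - t2) * m = 1 * m)
      linarith
    rw [ht2'] at hu2; simp at hu2
  have hnP : n - P ≠ 0 := by
    intro h
    have ht3' : t3 = 0 := by
      have := mul_right_cancel₀ hn (by linarith : (1 - t3) * n = 1 * n)
      linarith
    rw [ht3'] at hu3; simp at hu3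
  have ht2 : t2 = (m - P)/m := by field_simp; linarith
  subst ht2
  have ht3 : t3 = (n - P)/n := by field_simp; linarith
  subst ht3
  have hu2' : u2 = m/(m - P) := by
    field_simp at hu2
    field_simp
    linarith
  subst hu2'
  have hu3' : u3 = n/(n - P) := by
    field_simp at hu3
    field_simp
    linarith
  subst hu3'
  field_simp
  linear_combination P * hkey

set_option maxHeartbeats 1600000 in
theorem stmt5    (A B C : Pt) (hABC : AffineIndependent ℝ ![A, B, C])
    (ω : EuclideanGeometry.Sphere Pt) (hr : 0 < ω.radius)
    (hA : A ∈ ω) (hB : B ∈ ω) (hC : C ∈ ω)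
    (L : Pt) (hL : L = lemoinePoint A B C)
    (B' : Pt) (hB'w : B' ∈ ω) (hB'ne : B' ≠ B) (hB'col : Collinear ℝ ({B, L, B'} : Set Pt))
    (C' : Pt) (hC'w : C' ∈ ω) (hC'ne : C' ≠ C) (hC'col : Collinear ℝ ({C, L, C'} : Set Pt))
    (ω₂ : EuclideanGeometry.Sphere Pt) (hω₂1 : B' ∈ ω₂) (hω₂2 : L ∈ ω₂)
    (hω₂t : CircleTangentAt ω₂ ω B')
    (ω₃ : EuclideanGeometry.Sphere Pt) (hω₃1 : C' ∈ ω₃) (hω₃2 : L ∈ ω₃)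
    (hω₃t : CircleTangentAt ω₃ ω C')
    (hne : ω₂ ≠ ω₃) :
    {p : Pt | circlePower p ω₂ = circlePower p ω₃} = (affineSpan ℝ ({A, L} : Set Pt) : Set Pt) := by
  have hncol : ¬ Collinear ℝ ({A, B, C} : Set Pt) := by
    rw [affineIndependent_iff_not_collinear, range_three] at hABC; exact hABC
  have hAB : A ≠ B := by
    have := hABC.injective.ne (show (0:Fin 3) ≠ 1 by decide); simpa using this
  have hAC : A ≠ C := by
    have := hABC.injective.ne (show (0:Fin 3) ≠ 2 by decide); simpa using this
  have hBC : B ≠ C := by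
    have := hABC.injective.ne (show (1:Fin 3) ≠ 2 by decide); simpa using this
  have ha2 : 0 < dist B C ^ 2 := pow_pos (dist_pos.mpr hBC) 2
  have hb2 : 0 < dist C A ^ 2 := pow_pos (dist_pos.mpr hAC.symm) 2
  have hc2 : 0 < dist A B ^ 2 := pow_pos (dist_pos.mpr hAB) 2
  have hs : 0 < dist B C ^ 2 + dist C A ^ 2 + dist A B ^ 2 := by linarith
  have hs0 : dist B C ^ 2 + dist C A ^ 2 + dist A B ^ 2 ≠ 0 := ne_of_gt hs
  set a2 := dist B C ^ 2 with ha2def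
  set b2 := dist C A ^ 2 with hb2def
  set c2 := dist A B ^ 2 with hc2def
  set s := a2 + b2 + c2 with hsdef
  have hsum : a2/s + b2/s + c2/s = 1 := by field_simp; exact hsdef.symm
  have hLc : L = (a2/s) • A + (b2/s) • B + (c2/s) • C := by
    rw [hL, lemoinePoint]
  have hRA : dist A ω.center = ω.radius := by rwa [EuclideanGeometry.mem_sphere] at hA
  have hRB : dist B ω.center = ω.radius := by rwa [EuclideanGeometry.mem_sphere] at hB
  have hRC : dist C ω.center = ω.radius := by rwa [EuclideanGeometry.mem_sphere] at hC
  set Q0 := (a2/s)*(b2/s)*c2 + (b2/s)*(c2/s)*a2 + (a2/s)*(c2/s)*b2 with hQ0def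
  have hQ0pos : 0 < Q0 := by
    have h1 := mul_pos (mul_pos (div_pos ha2 hs) (div_pos hb2 hs)) hc2
    have h2 := mul_pos (mul_pos (div_pos hb2 hs) (div_pos hc2 hs)) ha2
    have h3 := mul_pos (mul_pos (div_pos ha2 hs) (div_pos hc2 hs)) hb2
    rw [hQ0def]; linarith
  have hP : circlePower L ω = -Q0 := by
    simp only [circlePower]
    rw [hLc, master _ _ _ hsum A B C ω.center, hRA, hRB, hRC,
        dist_comm A C, ← ha2def, ← hb2def, ← hc2def, hQ0def]
    linear_combination (ω.radius^2) * hsum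
  have hPneg : circlePower L ω < 0 := by rw [hP]; linarith
  have hPne : circlePower L ω ≠ 0 := ne_of_lt hPneg
  have hm : dist L B ^ 2 = (a2/s)*c2 + (c2/s)*a2 - Q0 := by
    rw [hLc, master _ _ _ hsum A B C B, dist_self, dist_comm C B, dist_comm A C,
        ← ha2def, ← hb2def, ← hc2def, hQ0def]
    ring
  have hn : dist L C ^ 2 = (a2/s)*b2 + (b2/s)*a2 - Q0 := by
    rw [hLc, master _ _ _ hsum A B C C, dist_self, dist_comm A C,
        ← ha2def, ← hb2def, ← hc2def, hQ0def]
    ring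
  have hkey : circlePower L ω * (b2 - c2) = b2 * dist L B ^ 2 - c2 * dist L C ^ 2 := by
    rw [hP, hm, hn, hQ0def]
    field_simp
    ring
  -- nondegeneracies
  have hLA : A ≠ L := by
    intro h
    have hv : (b2/s) • (B - A) + (c2/s) • (C - A) = 0 := by
      have h2 : ((a2/s) • A + (b2/s) • B + (c2/s) • C) - A
          = (b2/s) • (B - A) + (c2/s) • (C - A) + ((a2/s + b2/s + c2/s) - 1) • A := by
        module
      rw [hsum, sub_self, zero_smul, add_zero] at h2
      rw [← h2, ← hLc, ← h, sub_self]
    obtain ⟨h1, -⟩ := indep_helper A B C hncol _ _ hv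
    exact (div_pos hb2 hs).ne' h1
  have hLB : L ≠ B := by
    intro h
    have hncolB : ¬ Collinear ℝ ({B, A, C} : Set Pt) := fun hc =>
      hncol (hc.subset (by intro z hz; simp at hz ⊢; tauto))
    have hv : (a2/s) • (A - B) + (c2/s) • (C - B) = 0 := by
      have h2 : ((a2/s) • A + (b2/s) • B + (c2/s) • C) - B
          = (a2/s) • (A - B) + (c2/s) • (C - B) + ((a2/s + b2/s + c2/s) - 1) • B := by
        module
      rw [hsum, sub_self, zero_smul, add_zero] at h2
      rw [← h2, ← hLc, h, sub_self]
    obtain ⟨h1, -⟩ := indep_helper B A C hncolB _ _ hv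
    exact (div_pos ha2 hs).ne' h1
  have hLC : L ≠ C := by
    intro h
    have hncolC : ¬ Collinear ℝ ({C, A, B} : Set Pt) := fun hc =>
      hncol (hc.subset (by intro z hz; simp at hz ⊢; tauto))
    have hv : (a2/s) • (A - C) + (b2/s) • (B - C) = 0 := by
      have h2 : ((a2/s) • A + (b2/s) • B + (c2/s) • C) - C
          = (a2/s) • (A - C) + (b2/s) • (B - C) + ((a2/s + b2/s + c2/s) - 1) • C := by
        module
      rw [hsum, sub_self, zero_smul, add_zero] at h2
      rw [← h2, ← hLc, h, sub_self]
    obtain ⟨h1, -⟩ := indep_helper C A B hncolC _ _ hv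
    exact (div_pos ha2 hs).ne' h1
  have hmpos : (0:ℝ) < dist L B ^ 2 := pow_pos (dist_pos.mpr hLB) 2
  have hnpos : (0:ℝ) < dist L C ^ 2 := pow_pos (dist_pos.mpr hLC) 2
  -- branches
  obtain ⟨u2, t2, ht20, hB't2, h1t2, hu2t, hpow2⟩ :=
    branch ω ω₂ L B B' hr hB hB'w hB'ne hB'col hLB hω₂1 hω₂2 hω₂t hPne
  obtain ⟨u3, t3, ht30, hC't3, h1t3, hu3t, hpow3⟩ :=
    branch ω ω₃ L C C' hr hC hC'w hC'ne hC'col hLC hω₃1 hω₃2 hω₃t hPne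
  -- power of A equality
  have hfa : circlePower A ω₂ = circlePower A ω₃ := by
    rw [hpow2 A hA, hpow3 A hA]
    have hAB' : dist A B' ^ 2 = dist A L ^ 2
        - 2*(1-t2)*((A 0 - L 0)*(B 0 - L 0) + (A 1 - L 1)*(B 1 - L 1))
        + (1-t2)^2 * dist L B ^ 2 := by
      rw [hB't2]
      simp only [dist_sq', PiLp.add_apply, PiLp.smul_apply, PiLp.sub_apply, smul_eq_mul]
      ring
    have hAC' : dist A C' ^ 2 = dist A L ^ 2
        - 2*(1-t3)*((A 0 - L 0)*(C 0 - L 0) + (A 1 - L 1)*(C 1 - L 1))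
        + (1-t3)^2 * dist L C ^ 2 := by
      rw [hC't3]
      simp only [dist_sq', PiLp.add_apply, PiLp.smul_apply, PiLp.sub_apply, smul_eq_mul]
      ring
    have hc2X : c2 = dist A L ^ 2 + dist L B ^ 2
        - 2*((A 0 - L 0)*(B 0 - L 0) + (A 1 - L 1)*(B 1 - L 1)) := by
      rw [hc2def]
      simp only [dist_sq']
      ring
    have hb2Y : b2 = dist A L ^ 2 + dist L C ^ 2
        - 2*((A 0 - L 0)*(C 0 - L 0) + (A 1 - L 1)*(C 1 - L 1)) := by
      rw [hb2def]
      simp only [dist_sq']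
      ring
    rw [hAB', hAC']
    exact scalar_final (circlePower L ω) (dist L B ^ 2) (dist L C ^ 2) (dist A L ^ 2)
      _ _ b2 c2 u2 u3 t2 t3 (ne_of_gt hmpos) (ne_of_gt hnpos) hPne
      h1t2 h1t3 hu2t hu3t hc2X hb2Y hkey
  -- power of L equality
  have hfL : circlePower L ω₂ = circlePower L ω₃ := by
    have z2 : circlePower L ω₂ = 0 := by
      simp only [circlePower]
      rw [show dist L ω₂.center = ω₂.radius by rwa [EuclideanGeometry.mem_sphere] at hω₂2]
      ring
    have z3 : circlePower L ω₃ = 0 := by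
      simp only [circlePower]
      rw [show dist L ω₃.center = ω₃.radius by rwa [EuclideanGeometry.mem_sphere] at hω₃2]
      ring
    rw [z2, z3]
  -- centers distinct
  have hcent : ¬ (ω₂.center 0 = ω₃.center 0 ∧ ω₂.center 1 = ω₃.center 1) := by
    rintro ⟨e0, e1⟩
    apply hne
    have hcc : ω₂.center = ω₃.center := by
      ext i
      fin_cases i
      · exact e0
      · exact e1
    have hr2' : dist L ω₂.center = ω₂.radius := by rwa [EuclideanGeometry.mem_sphere] at hω₂2
    have hr3' : dist L ω₃.center = ω₃.radius := by rwa [EuclideanGeometry.mem_sphere] at hω₃2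
    have hrr : ω₂.radius = ω₃.radius := by rw [← hr2', ← hr3', hcc]
    cases ω₂; cases ω₃; simp_all
  -- linear form of power difference
  have lin : ∀ q : Pt, circlePower q ω₂ - circlePower q ω₃ =
      2*(q 0)*(ω₃.center 0 - ω₂.center 0) + 2*(q 1)*(ω₃.center 1 - ω₂.center 1)
      + ((ω₂.center 0^2 + ω₂.center 1^2 - ω₂.radius^2)
         - (ω₃.center 0^2 + ω₃.center 1^2 - ω₃.radius^2)) := by
    intro q
    simp only [circlePower, dist_sq']
    ring
  -- conclude
  ext p
  simp only [Set.mem_setOf_eq, SetLike.mem_coe]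
  rw [span_pair_mem_iff]
  constructor
  · intro hp
    have l1 := lin p
    have l2 := lin A
    have l3 := lin L
    rw [hp, sub_self] at l1
    rw [hfa, sub_self] at l2
    rw [hfL, sub_self] at l3
    have ep : (p 0 - A 0) * (ω₃.center 0 - ω₂.center 0)
        + (p 1 - A 1) * (ω₃.center 1 - ω₂.center 1) = 0 := by
      linear_combination (-1/2) * l1 + (1/2) * l2
    have eL : (L 0 - A 0) * (ω₃.center 0 - ω₂.center 0)
        + (L 1 - A 1) * (ω₃.center 1 - ω₂.center 1) = 0 := by
      linear_combination (-1/2) * l3 + (1/2) * l2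
    have cross : (p 0 - A 0)*(L 1 - A 1) - (p 1 - A 1)*(L 0 - A 0) = 0 := by
      rcases not_and_or.mp hcent with h | h
      · have hv0 : ω₃.center 0 - ω₂.center 0 ≠ 0 := fun hh => h (by linarith)
        apply mul_left_cancel₀ hv0
        rw [mul_zero]
        linear_combination (L 1 - A 1) * ep - (p 1 - A 1) * eL
      · have hv1 : ω₃.center 1 - ω₂.center 1 ≠ 0 := fun hh => h (by linarith)
        apply mul_left_cancel₀ hv1
        rw [mul_zero]
        linear_combination (-(L 0 - A 0)) * ep + (p 0 - A 0) * eL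
    have hALc : ¬ (L 0 - A 0 = 0 ∧ L 1 - A 1 = 0) := by
      rintro ⟨e0, e1⟩
      apply hLA
      ext i
      fin_cases i
      · simp; linarith
      · simp; linarith
    rcases not_and_or.mp hALc with h | h
    · refine ⟨(p 0 - A 0)/(L 0 - A 0), ?_⟩
      ext i
      fin_cases i
      · simp only [PiLp.add_apply, PiLp.smul_apply, PiLp.sub_apply, smul_eq_mul, Fin.zero_eta, Fin.mk_one]
        field_simp
        ring
      · simp only [PiLp.add_apply, PiLp.smul_apply, PiLp.sub_apply, smul_eq_mul, Fin.zero_eta, Fin.mk_one]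
        field_simp
        linear_combination -cross
    · refine ⟨(p 1 - A 1)/(L 1 - A 1), ?_⟩
      ext i
      fin_cases i
      · simp only [PiLp.add_apply, PiLp.smul_apply, PiLp.sub_apply, smul_eq_mul, Fin.zero_eta, Fin.mk_one]
        field_simp
        linear_combination cross
      · simp only [PiLp.add_apply, PiLp.smul_apply, PiLp.sub_apply, smul_eq_mul, Fin.zero_eta, Fin.mk_one]
        field_simp
        ring
  · rintro ⟨r, rfl⟩
    have l1 := lin (A + r • (L - A))
    have l2 := lin A
    have l3 := lin L
    simp only [PiLp.add_apply, PiLp.smul_apply, PiLp.sub_apply, smul_eq_mul] at l1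
    rw [hfa, sub_self] at l2
    rw [hfL, sub_self] at l3
    linear_combination l1 - (1-r) * l2 - r * l3
end
end

section
/- (Converse theorem) Let P be a point inside triangle ABC, and define A', B', C', the tangent circles ω₁, ω₂, ω₃ at A', B', C' through P, and the six intersection points with the side lines as in the main construction. If the six points A_b, A_c, B_a, B_c, C_a, C_b lie on one circle, then P is the Lemoine point of triangle ABC. -/
open EuclideanGeometry RealInnerProductSpace

noncomputable section

lemma inner22 (x y z w : Pt) :
    ⟪x - y, z - w⟫ = (‖x - w‖^2 + ‖y - z‖^2 - ‖x - z‖^2 - ‖y - w‖^2)/2 := by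
  simp only [norm_sub_sq_real, inner_sub_left, inner_sub_right]
  ring

lemma norm_smul_sq (t : ℝ) (b : Pt) : ‖t • b‖^2 = t^2 * ‖b‖^2 := by
  rw [norm_smul]; simp [mul_pow, sq_abs]

lemma norm_add_smul_sq (a b : Pt) (t : ℝ) :
    ‖a + t • b‖^2 = ‖a‖^2 + 2*(t*⟪a, b⟫) + t^2*‖b‖^2 := by
  rw [norm_add_sq_real, real_inner_smul_right, norm_smul_sq]

lemma norm_sub_smul_sq (a b : Pt) (t : ℝ) :
    ‖a - t • b‖^2 = ‖a‖^2 - 2*(t*⟪a, b⟫) + t^2*‖b‖^2 := by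
  rw [norm_sub_sq_real, real_inner_smul_right, norm_smul_sq]

lemma collin3 {p₁ p₂ p₃ : Pt} (h : Collinear ℝ ({p₁, p₂, p₃} : Set Pt)) (h12 : p₁ ≠ p₂) :
    ∃ t : ℝ, p₃ = p₁ + t • (p₂ - p₁) := by
  rw [collinear_iff_of_mem (Set.mem_insert p₁ _)] at h
  obtain ⟨v, hv⟩ := h
  obtain ⟨r₂, h₂⟩ := hv p₂ (by simp)
  obtain ⟨r₃, h₃⟩ := hv p₃ (by simp)
  have hr₂ : r₂ ≠ 0 := by
    rintro rfl
    simp only [zero_smul, vadd_eq_add, zero_add] at h₂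
    exact h12 h₂.symm
  refine ⟨r₃/r₂, ?_⟩
  rw [h₃, h₂]
  simp only [vadd_eq_add]
  rw [add_sub_cancel_right, smul_smul, div_mul_cancel₀ _ hr₂]
  abel

/-- power of a point on a secant line -/
lemma pow_secant (s : EuclideanGeometry.Sphere Pt) {X Y Z : Pt}
    (hY : dist Y s.center = s.radius) (hZ : dist Z s.center = s.radius)
    (hYZ : Y ≠ Z) (hcol : Collinear ℝ ({X, Y, Z} : Set Pt)) :
    ⟪X - Y, X - Z⟫ = circlePower X s := by
  have hcol' : Collinear ℝ ({Y, Z, X} : Set Pt) := by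
    refine Collinear.subset ?_ hcol
    intro p hp; simp only [Set.mem_insert_iff, Set.mem_singleton_iff] at hp ⊢; tauto
  obtain ⟨t, ht⟩ := collin3 hcol' hYZ
  have h1 : X - Y = t • (Z - Y) := by rw [ht]; abel
  have h2 : X - Z = Y - Z + t • (Z - Y) := by rw [ht]; abel
  have h2' : X - Z = (t - 1) • (Z - Y) := by
    rw [h2, sub_smul, one_smul]; abel
  have hYc : ‖Y - s.center‖^2 = s.radius^2 := by
    rw [← dist_eq_norm, hY]
  have hZc : ‖Z - s.center‖^2 = s.radius^2 := by
    rw [← dist_eq_norm, hZ]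
  have hXc : X - s.center = Y - s.center + t • (Z - Y) := by rw [ht]; abel
  have hI : 2 * ⟪Y - s.center, Z - Y⟫ = - ‖Z - Y‖^2 := by
    rw [inner22]
    have : ‖Y - Y‖ = 0 := by simp
    rw [this]
    rw [show ‖s.center - Z‖ = ‖Z - s.center‖ from norm_sub_rev _ _,
        show ‖s.center - Y‖ = ‖Y - s.center‖ from norm_sub_rev _ _,
        show ‖Y - Z‖ = ‖Z - Y‖ from norm_sub_rev _ _, hYc, hZc]
    ring
  have hpow : circlePower X s = 2*(t*⟪Y - s.center, Z - Y⟫) + t^2*‖Z - Y‖^2 := by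
    unfold circlePower
    rw [dist_eq_norm, hXc, norm_add_smul_sq, hYc]; ring
  rw [h1, h2', real_inner_smul_left, real_inner_smul_right, real_inner_self_eq_norm_sq, hpow]
  linear_combination (-t) * hI

/-- main per-circle computation -/
lemma circle_key (c : Pt) (r : ℝ) {A A' P X : Pt} (ω₁ : EuclideanGeometry.Sphere Pt)
    (hA : dist A c = r) (hA' : dist A' c = r) (hX : dist X c = r)
    (hP : dist P c < r)
    (hcol : Collinear ℝ ({A, P, A'} : Set Pt)) (hne : A' ≠ A)
    (hm1 : dist A' ω₁.center = ω₁.radius) (hm2 : dist P ω₁.center = ω₁.radius)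
    (htan : Collinear ℝ ({ω₁.center, c, A'} : Set Pt)) :
    circlePower X ω₁ * (dist P A ^2 + (r^2 - dist P c^2)) =
      dist P A ^2 * dist X A ^2
        - 2*((dist P A ^2 + (r^2 - dist P c^2)) * ⟪X - A, P - A⟫)
        + (dist P A ^2 + (r^2 - dist P c^2))^2 := by
  set D := r^2 - dist P c^2 with hD_def
  have hr0 : (0:ℝ) ≤ r := le_trans dist_nonneg hP.le
  have hD : 0 < D := by
    have : dist P c ^ 2 < r^2 := by nlinarith [dist_nonneg (x := P) (y := c)]
    simpa [hD_def] using sub_pos.mpr this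
  have hPA : A ≠ P := by
    intro h; rw [← h] at hP; rw [hA] at hP; exact lt_irrefl _ hP
  -- parametrize A'
  obtain ⟨s, hs⟩ := collin3 hcol hPA
  have hs0 : s ≠ 0 := by
    rintro rfl; simp at hs; exact hne hs
  set na := dist P A ^ 2 with hna_def
  have hna : 0 < na := by
    have : dist P A ≠ 0 := dist_ne_zero.mpr (Ne.symm hPA)
    positivity
  -- key: s * na = na + D
  have hinner : 2 * ⟪A - c, P - A⟫ = -(na + D) := by
    rw [inner22]
    simp only [sub_self, norm_zero]
    rw [show ‖c - P‖ = dist P c from (dist_eq_norm P c) ▸ norm_sub_rev c P,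
        show ‖A - P‖ = dist P A from (dist_eq_norm P A) ▸ norm_sub_rev A P,
        show ‖c - A‖ = dist A c from (dist_eq_norm A c) ▸ norm_sub_rev c A, hA]
    simp only [hna_def, hD_def]
    ring
  have hsphere : ‖(A - c) + s • (P - A)‖^2 = r^2 := by
    have : A + s • (P - A) - c = (A - c) + s • (P - A) := by abel
    rw [← this, ← dist_eq_norm, ← hs, hA']
  have hAc : ‖A - c‖^2 = r^2 := by rw [← dist_eq_norm, hA]
  have hPAn : ‖P - A‖^2 = na := by rw [← dist_eq_norm]
  have hsna : s * na = na + D := by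
    rw [norm_add_smul_sq, hAc, hPAn] at hsphere
    have h2 : s * (2 * ⟪A - c, P - A⟫ + s * na) = 0 := by nlinarith
    have h3 : 2 * ⟪A - c, P - A⟫ + s * na = 0 := by
      rcases mul_eq_zero.mp h2 with h | h
      · exact absurd h hs0
      · exact h
    nlinarith [hinner]
  -- parametrize the tangent circle's center
  have hrpos : 0 < r := lt_of_le_of_lt dist_nonneg hP
  have hA'c : A' ≠ c := by
    intro h; rw [h] at hA'; simp at hA'; rw [← hA'] at hrpos; exact lt_irrefl _ hrpos
  have htan' : Collinear ℝ ({A', c, ω₁.center} : Set Pt) := by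
    refine Collinear.subset ?_ htan
    intro p hp; simp only [Set.mem_insert_iff, Set.mem_singleton_iff] at hp ⊢; tauto
  obtain ⟨u, hu⟩ := collin3 htan' hA'c
  have hcA' : ‖c - A'‖^2 = r^2 := by
    rw [← dist_eq_norm, dist_comm, hA']
  have hrad : ω₁.radius^2 = u^2 * r^2 := by
    rw [← hm1, dist_eq_norm, hu]
    rw [show A' - (A' + u • (c - A')) = -(u • (c - A')) from by abel]
    rw [norm_neg, norm_smul_sq, hcA']
  -- membership of P in ω₁
  have hiP : 2 * ⟪P - A', c - A'⟫ = ‖P - A'‖^2 + D := by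
    rw [inner22]
    simp only [sub_self, norm_zero]
    rw [show ‖A' - c‖ = ‖c - A'‖ from norm_sub_rev _ _,
        show ‖P - c‖ = dist P c from dist_eq_norm P c]
    linear_combination hcA' - hD_def
  have hPmem : ‖P - A'‖^2 = u * (‖P - A'‖^2 + D) := by
    have h1 : ‖(P - A') - u • (c - A')‖^2 = u^2 * r^2 := by
      rw [show P - A' - u • (c - A') = P - (A' + u • (c - A')) from by abel, ← hu,
        ← dist_eq_norm, hm2, hrad]
    rw [norm_sub_smul_sq, hcA'] at h1
    linear_combination h1 + u * hiP
  have hPA'n : na * ‖P - A'‖^2 = D^2 := by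
    have h1 : P - A' = (1 - s) • (P - A) := by
      rw [hs, sub_smul, one_smul]; abel
    rw [h1, norm_smul_sq, hPAn]
    linear_combination (s*na - na + D) * hsna
  have hu2 : u * (na + D) = D := by
    have h4 : na * ‖P - A'‖^2 = u * (na * ‖P - A'‖^2 + na * D) := by
      linear_combination na * hPmem
    rw [hPA'n] at h4
    have h5 : D * (u * (na + D)) = D * D := by linear_combination -h4
    exact mul_left_cancel₀ hD.ne' h5
  -- power of X
  have hiX : 2 * ⟪X - A', c - A'⟫ = ‖X - A'‖^2 := by
    rw [inner22]
    simp only [sub_self, norm_zero]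
    rw [show ‖A' - c‖ = ‖c - A'‖ from norm_sub_rev _ _,
        show ‖X - c‖ = dist X c from dist_eq_norm X c, hX]
    linear_combination hcA'
  have hpowX : circlePower X ω₁ = (1 - u) * ‖X - A'‖^2 := by
    unfold circlePower
    rw [dist_eq_norm, hu, show X - (A' + u • (c - A')) = (X - A') - u • (c - A') from by abel,
      norm_sub_smul_sq, hcA', hrad]
    linear_combination (-u) * hiX
  have hXA' : ‖X - A'‖^2 = ‖X - A‖^2 - 2*(s*⟪X - A, P - A⟫) + s^2*na := by
    rw [hs, show X - (A + s • (P - A)) = (X - A) - s • (P - A) from by abel,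
      norm_sub_smul_sq, hPAn]
  have hdXA : dist X A ^ 2 = ‖X - A‖^2 := dist_eq_norm X A ▸ rfl
  rw [hpowX, hdXA]
  have expand : (1 - u) * (na + D) = na := by linear_combination -hu2
  calc (1 - u) * ‖X - A'‖^2 * (na + D)
      = ((1-u)*(na+D)) * ‖X - A'‖^2 := by ring
    _ = na * ‖X - A'‖^2 := by rw [expand]
    _ = na * ‖X - A‖^2 - 2*((na + D) * ⟪X - A, P - A⟫) + (na + D)^2 := by
        rw [hXA']
        linear_combination (s*na + na + D - 2*⟪X - A, P - A⟫) * hsna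

lemma norm_smul_add_smul_sq (x y : Pt) (s t : ℝ) :
    ‖s • x + t • y‖^2 = s^2*‖x‖^2 + 2*(s*t*⟪x, y⟫) + t^2*‖y‖^2 := by
  rw [norm_add_sq_real, real_inner_smul_left, real_inner_smul_right,
    norm_smul_sq, norm_smul_sq]; ring

/-- the barycentric form of the per-circle computation -/
lemma vertex_key (c : Pt) (r : ℝ) {V V' W X P : Pt} (ω₁ : EuclideanGeometry.Sphere Pt)
    (hV : dist V c = r) (hW : dist W c = r) (hX : dist X c = r) (hV' : dist V' c = r)
    (hP : dist P c < r)
    (hcol : Collinear ℝ ({V, P, V'} : Set Pt)) (hne : V' ≠ V)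
    (hm1 : dist V' ω₁.center = ω₁.radius) (hm2 : dist P ω₁.center = ω₁.radius)
    (htan : Collinear ℝ ({ω₁.center, c, V'} : Set Pt))
    (b d : ℝ) (hPV : P - V = b • (W - V) + d • (X - V)) :
    circlePower X ω₁ * (b * dist V W^2 + d * dist V X^2) =
      b^2 * (dist V W^2 * dist W X^2) := by
  have key := circle_key c r ω₁ hV hV' hX hP hcol hne hm1 hm2 htan
  have hVW : dist V W ^2 = ‖W - V‖^2 := by rw [dist_comm, dist_eq_norm]
  have hVX : dist V X ^2 = ‖X - V‖^2 := by rw [dist_comm, dist_eq_norm]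
  have hWX : dist W X ^2 = ‖W - X‖^2 := by rw [dist_eq_norm]
  have hPVn : dist P V ^2 = ‖P - V‖^2 := by rw [dist_eq_norm]
  have hXVn : dist X V ^2 = ‖X - V‖^2 := by rw [dist_eq_norm]
  have hE : 2 * ⟪W - V, X - V⟫ = ‖W - V‖^2 + ‖X - V‖^2 - ‖W - X‖^2 := by
    rw [inner22]
    simp only [sub_self, norm_zero]
    rw [show ‖V - X‖ = ‖X - V‖ from norm_sub_rev _ _]
    ring
  have hnP : ‖P - V‖^2 = b^2*‖W - V‖^2 + 2*(b*d*⟪W - V, X - V⟫) + d^2*‖X - V‖^2 := by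
    rw [hPV, norm_smul_add_smul_sq]
  have hIX : ⟪X - V, P - V⟫ = b*⟪W - V, X - V⟫ + d*‖X - V‖^2 := by
    rw [hPV, inner_add_right, real_inner_smul_right, real_inner_smul_right,
      real_inner_self_eq_norm_sq, real_inner_comm]
  -- the ∑-of-coefficients identity for the denominator
  have hVc : ‖V - c‖^2 = r^2 := by rw [← dist_eq_norm, hV]
  have hinner : 2 * ⟪V - c, P - V⟫ = -(‖P - V‖^2 + (r^2 - dist P c^2)) := by
    rw [inner22]
    simp only [sub_self, norm_zero]
    rw [show ‖c - P‖ = dist P c from (dist_eq_norm P c) ▸ norm_sub_rev c P,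
        show ‖V - P‖ = ‖P - V‖ from norm_sub_rev _ _,
        show ‖c - V‖ = ‖V - c‖ from norm_sub_rev c V]
    linear_combination -hVc
  have hiW : 2 * ⟪V - c, W - V⟫ = -‖W - V‖^2 := by
    rw [inner22]
    simp only [sub_self, norm_zero]
    rw [show ‖c - W‖ = dist W c from (dist_eq_norm W c) ▸ norm_sub_rev c W, hW,
        show ‖V - W‖ = ‖W - V‖ from norm_sub_rev _ _,
        show ‖c - V‖ = ‖V - c‖ from norm_sub_rev c V]
    linear_combination -hVc
  have hiX2 : 2 * ⟪V - c, X - V⟫ = -‖X - V‖^2 := by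
    rw [inner22]
    simp only [sub_self, norm_zero]
    rw [show ‖c - X‖ = dist X c from (dist_eq_norm X c) ▸ norm_sub_rev c X, hX,
        show ‖V - X‖ = ‖X - V‖ from norm_sub_rev _ _,
        show ‖c - V‖ = ‖V - c‖ from norm_sub_rev c V]
    linear_combination -hVc
  have hsplit : ⟪V - c, P - V⟫ = b*⟪V - c, W - V⟫ + d*⟪V - c, X - V⟫ := by
    rw [hPV, inner_add_right, real_inner_smul_right, real_inner_smul_right]
  have hQ : dist P V ^2 + (r^2 - dist P c^2) = b * dist V W^2 + d * dist V X^2 := by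
    rw [hPVn, hVW, hVX]
    linear_combination hinner - b*hiW - d*hiX2 - 2*hsplit
  rw [hQ] at key
  rw [key, hPVn, hXVn, hVW, hVX, hWX, hnP, hIX]
  linear_combination (-(b^2*‖W - V‖^2)) * hE

theorem stmt8    (A B C : Pt) (hABC : AffineIndependent ℝ ![A, B, C])
    (ω : EuclideanGeometry.Sphere Pt) (hr : 0 < ω.radius)
    (hA : A ∈ ω) (hB : B ∈ ω) (hC : C ∈ ω)
    (P : Pt) (hP : P ∈ interior (convexHull ℝ ({A, B, C} : Set Pt)))
    (A' : Pt) (hA'w : A' ∈ ω) (hA'ne : A' ≠ A) (hA'col : Collinear ℝ ({A, P, A'} : Set Pt))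
    (B' : Pt) (hB'w : B' ∈ ω) (hB'ne : B' ≠ B) (hB'col : Collinear ℝ ({B, P, B'} : Set Pt))
    (C' : Pt) (hC'w : C' ∈ ω) (hC'ne : C' ≠ C) (hC'col : Collinear ℝ ({C, P, C'} : Set Pt))
    (ω₁ : EuclideanGeometry.Sphere Pt) (hω₁1 : A' ∈ ω₁) (hω₁2 : P ∈ ω₁)
    (hω₁t : CircleTangentAt ω₁ ω A')
    (A_b A_c : Pt) (hA_bA_c : A_b ≠ A_c)
    (hA_bc : A_b ∈ ω₁) (hA_bl : A_b ∈ affineSpan ℝ ({B, C} : Set Pt))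
    (hA_cc : A_c ∈ ω₁) (hA_cl : A_c ∈ affineSpan ℝ ({B, C} : Set Pt))
    (ω₂ : EuclideanGeometry.Sphere Pt) (hω₂1 : B' ∈ ω₂) (hω₂2 : P ∈ ω₂)
    (hω₂t : CircleTangentAt ω₂ ω B')
    (B_c B_a : Pt) (hB_cB_a : B_c ≠ B_a)
    (hB_cc : B_c ∈ ω₂) (hB_cl : B_c ∈ affineSpan ℝ ({C, A} : Set Pt))
    (hB_ac : B_a ∈ ω₂) (hB_al : B_a ∈ affineSpan ℝ ({C, A} : Set Pt))
    (ω₃ : EuclideanGeometry.Sphere Pt) (hω₃1 : C' ∈ ω₃) (hω₃2 : P ∈ ω₃)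
    (hω₃t : CircleTangentAt ω₃ ω C')
    (C_a C_b : Pt) (hC_aC_b : C_a ≠ C_b)
    (hC_ac : C_a ∈ ω₃) (hC_al : C_a ∈ affineSpan ℝ ({A, B} : Set Pt))
    (hC_bc : C_b ∈ ω₃) (hC_bl : C_b ∈ affineSpan ℝ ({A, B} : Set Pt))
    (hconc : ∃ s : EuclideanGeometry.Sphere Pt, A_b ∈ s ∧ A_c ∈ s ∧ B_a ∈ s ∧ B_c ∈ s ∧ C_a ∈ s ∧ C_b ∈ s) :
    P = lemoinePoint A B C := by
  obtain ⟨S, hS1, hS2, hS3, hS4, hS5, hS6⟩ := hconc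
  set c := ω.center with hc
  set r := ω.radius with hrdef
  have hAd : dist A c = r := EuclideanGeometry.mem_sphere.mp hA
  have hBd : dist B c = r := EuclideanGeometry.mem_sphere.mp hB
  have hCd : dist C c = r := EuclideanGeometry.mem_sphere.mp hC
  have hA'd : dist A' c = r := EuclideanGeometry.mem_sphere.mp hA'w
  have hB'd : dist B' c = r := EuclideanGeometry.mem_sphere.mp hB'w
  have hC'd : dist C' c = r := EuclideanGeometry.mem_sphere.mp hC'w
  -- P is strictly inside the circle
  have hsub : convexHull ℝ ({A, B, C} : Set Pt) ⊆ Metric.closedBall c r := by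
    apply convexHull_min ?_ (convex_closedBall c r)
    intro x hx
    rcases hx with h | h | h
    · subst h; simp [Metric.mem_closedBall, hAd]
    · subst h; simp [Metric.mem_closedBall, hBd]
    · simp only [Set.mem_singleton_iff] at h; subst h
      simp [Metric.mem_closedBall, hCd]
  have hPc : dist P c < r := by
    have h1 := interior_mono hsub hP
    rw [interior_closedBall c hr.ne'] at h1
    exact Metric.mem_ball.mp h1
  -- barycentric coordinates of P
  have htot : affineSpan ℝ (Set.range ![A, B, C]) = ⊤ := by
    rw [hABC.affineSpan_eq_top_iff_card_eq_finrank_add_one]; simp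
  obtain ⟨α, β, γ, hα, hβ, hγ, hsum, hP3⟩ :
      ∃ a b c' : ℝ, 0 < a ∧ 0 < b ∧ 0 < c' ∧ a + b + c' = 1 ∧ P = a • A + b • B + c' • C := by
    let b : AffineBasis (Fin 3) ℝ Pt := ⟨![A, B, C], hABC, htot⟩
    have hcoe : ⇑b = ![A, B, C] := rfl
    have hrange : Set.range ⇑b = ({A, B, C} : Set Pt) := by
      rw [hcoe]; ext x; simp [Matrix.range_cons, Matrix.range_empty]; tauto
    rw [← hrange, b.interior_convexHull] at hP
    have hpos : ∀ i, 0 < b.coord i P := hP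
    have hsum : ∑ i, b.coord i P = 1 := b.sum_coord_apply_eq_one P
    have hcomb := b.affineCombination_coord_eq_self P
    rw [Finset.affineCombination_eq_linear_combination _ _ _ hsum] at hcomb
    rw [Fin.sum_univ_three] at hcomb
    rw [Fin.sum_univ_three] at hsum
    refine ⟨_, _, _, hpos 0, hpos 1, hpos 2, hsum, ?_⟩
    rw [show b 0 = A from rfl, show b 1 = B from rfl, show b 2 = C from rfl] at hcomb
    exact hcomb.symm
  -- vertex decompositions
  have hPA2 : P - A = γ • (C - A) + β • (B - A) := by
    rw [hP3, show α = 1 - β - γ by linarith]; module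
  have hPA3 : P - A = β • (B - A) + γ • (C - A) := by
    rw [hP3, show α = 1 - β - γ by linarith]; module
  have hPB2 : P - B = α • (A - B) + γ • (C - B) := by
    rw [hP3, show β = 1 - α - γ by linarith]; module
  have hPC2 : P - C = α • (A - C) + β • (B - C) := by
    rw [hP3, show γ = 1 - α - β by linarith]; module
  -- side lengths are positive
  have hAB : A ≠ B := by
    intro h
    have h2 : (![A, B, C] : Fin 3 → Pt) 0 = ![A, B, C] 1 := by simp [h]
    exact absurd (hABC.injective h2) (by decide)
  have hACne : A ≠ C := by
    intro h
    have h2 : (![A, B, C] : Fin 3 → Pt) 0 = ![A, B, C] 2 := by simp [h]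
    exact absurd (hABC.injective h2) (by decide)
  have hBCne : B ≠ C := by
    intro h
    have h2 : (![A, B, C] : Fin 3 → Pt) 1 = ![A, B, C] 2 := by simp [h]
    exact absurd (hABC.injective h2) (by decide)
  have hA2 : 0 < dist B C ^ 2 := by
    have := dist_pos.mpr hBCne; positivity
  have hB2 : 0 < dist C A ^ 2 := by
    have := dist_pos.mpr (Ne.symm hACne); positivity
  have hC2 : 0 < dist A B ^ 2 := by
    have := dist_pos.mpr hAB; positivity
  -- the four key circle equations
  have hm11 : dist A' ω₁.center = ω₁.radius := EuclideanGeometry.mem_sphere.mp hω₁1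
  have hm12 : dist P ω₁.center = ω₁.radius := EuclideanGeometry.mem_sphere.mp hω₁2
  have hm21 : dist B' ω₂.center = ω₂.radius := EuclideanGeometry.mem_sphere.mp hω₂1
  have hm22 : dist P ω₂.center = ω₂.radius := EuclideanGeometry.mem_sphere.mp hω₂2
  have hm31 : dist C' ω₃.center = ω₃.radius := EuclideanGeometry.mem_sphere.mp hω₃1
  have hm32 : dist P ω₃.center = ω₃.radius := EuclideanGeometry.mem_sphere.mp hω₃2
  have eB1 := vertex_key c r ω₁ hAd hCd hBd hA'd hPc hA'col hA'ne hm11 hm12 hω₁t.2.2 γ β hPA2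
  have eC1 := vertex_key c r ω₁ hAd hBd hCd hA'd hPc hA'col hA'ne hm11 hm12 hω₁t.2.2 β γ hPA3
  have eC2 := vertex_key c r ω₂ hBd hAd hCd hB'd hPc hB'col hB'ne hm21 hm22 hω₂t.2.2 α γ hPB2
  have eB3 := vertex_key c r ω₃ hCd hAd hBd hC'd hPc hC'col hC'ne hm31 hm32 hω₃t.2.2 α β hPC2
  rw [dist_comm A C, dist_comm C B] at eB1
  rw [dist_comm A C] at eC1
  rw [dist_comm B A, dist_comm A C] at eC2
  rw [dist_comm C B] at eB3
  -- equal powers through the common circle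
  have hmS1 : dist A_b S.center = S.radius := EuclideanGeometry.mem_sphere.mp hS1
  have hmS2 : dist A_c S.center = S.radius := EuclideanGeometry.mem_sphere.mp hS2
  have hmS3 : dist B_a S.center = S.radius := EuclideanGeometry.mem_sphere.mp hS3
  have hmS4 : dist B_c S.center = S.radius := EuclideanGeometry.mem_sphere.mp hS4
  have hmS5 : dist C_a S.center = S.radius := EuclideanGeometry.mem_sphere.mp hS5
  have hmS6 : dist C_b S.center = S.radius := EuclideanGeometry.mem_sphere.mp hS6
  have powB : circlePower B ω₁ = circlePower B ω₃ := by
    have c1 : Collinear ℝ ({B, A_b, A_c} : Set Pt) :=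
      collinear_triple_of_mem_affineSpan_pair (left_mem_affineSpan_pair ℝ B C) hA_bl hA_cl
    have c2 : Collinear ℝ ({B, C_a, C_b} : Set Pt) :=
      collinear_triple_of_mem_affineSpan_pair (right_mem_affineSpan_pair ℝ A B) hC_al hC_bl
    have p1 := pow_secant ω₁ (EuclideanGeometry.mem_sphere.mp hA_bc)
      (EuclideanGeometry.mem_sphere.mp hA_cc) hA_bA_c c1
    have p2 := pow_secant S hmS1 hmS2 hA_bA_c c1
    have p3 := pow_secant ω₃ (EuclideanGeometry.mem_sphere.mp hC_ac)
      (EuclideanGeometry.mem_sphere.mp hC_bc) hC_aC_b c2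
    have p4 := pow_secant S hmS5 hmS6 hC_aC_b c2
    rw [← p1, p2, ← p4, p3]
  have powC : circlePower C ω₁ = circlePower C ω₂ := by
    have c3 : Collinear ℝ ({C, A_b, A_c} : Set Pt) :=
      collinear_triple_of_mem_affineSpan_pair (right_mem_affineSpan_pair ℝ B C) hA_bl hA_cl
    have c4 : Collinear ℝ ({C, B_c, B_a} : Set Pt) :=
      collinear_triple_of_mem_affineSpan_pair (left_mem_affineSpan_pair ℝ C A) hB_cl hB_al
    have p5 := pow_secant ω₁ (EuclideanGeometry.mem_sphere.mp hA_bc)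
      (EuclideanGeometry.mem_sphere.mp hA_cc) hA_bA_c c3
    have p6 := pow_secant S hmS1 hmS2 hA_bA_c c3
    have p7 := pow_secant ω₂ (EuclideanGeometry.mem_sphere.mp hB_cc)
      (EuclideanGeometry.mem_sphere.mp hB_ac) hB_cB_a c4
    have p8 := pow_secant S hmS4 hmS3 hB_cB_a c4
    rw [← p5, p6, ← p8, p7]
  -- cross-multiplied equations
  have EB : γ^2*(dist C A^2 * dist B C^2)*(α*dist C A^2 + β*dist B C^2)
      = α^2*(dist C A^2 * dist A B^2)*(γ*dist C A^2 + β*dist A B^2) := by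
    rw [← eB1, ← eB3, powB]; ring
  have EC : β^2*(dist A B^2 * dist B C^2)*(α*dist A B^2 + γ*dist B C^2)
      = α^2*(dist A B^2 * dist C A^2)*(β*dist A B^2 + γ*dist C A^2) := by
    rw [← eC1, ← eC2, powC]; ring
  have EB' : γ^2*dist B C^2*(α*dist C A^2 + β*dist B C^2)
      = α^2*dist A B^2*(γ*dist C A^2 + β*dist A B^2) :=
    mul_left_cancel₀ hB2.ne' (by linear_combination EB)
  have EC' : β^2*dist B C^2*(α*dist A B^2 + γ*dist B C^2)
      = α^2*dist C A^2*(β*dist A B^2 + γ*dist C A^2) :=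
    mul_left_cancel₀ hC2.ne' (by linear_combination EC)
  -- factor
  have hF : 0 < α*β*dist A B^2 + β*γ*dist B C^2 + γ*α*dist C A^2 := by positivity
  have f1 : (γ*dist B C^2 - α*dist A B^2)
      * (α*β*dist A B^2 + β*γ*dist B C^2 + γ*α*dist C A^2) = 0 := by
    linear_combination EB'
  have f2 : (β*dist B C^2 - α*dist C A^2)
      * (α*β*dist A B^2 + β*γ*dist B C^2 + γ*α*dist C A^2) = 0 := by
    linear_combination EC'
  have hz1 : γ*dist B C^2 = α*dist A B^2 := by
    rcases mul_eq_zero.mp f1 with h | h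
    · exact sub_eq_zero.mp h
    · exact absurd h hF.ne'
  have hz2 : β*dist B C^2 = α*dist C A^2 := by
    rcases mul_eq_zero.mp f2 with h | h
    · exact sub_eq_zero.mp h
    · exact absurd h hF.ne'
  have hz3 : β*dist A B^2 = γ*dist C A^2 :=
    mul_left_cancel₀ hA2.ne' (by linear_combination dist A B^2 * hz2 - dist C A^2 * hz1)
  -- solve for the coordinates
  have hSpos : 0 < dist B C^2 + dist C A^2 + dist A B^2 := by positivity
  have hα2 : α*(dist B C^2 + dist C A^2 + dist A B^2) = dist B C^2 := by
    linear_combination -hz2 - hz1 + dist B C^2 * hsum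
  have hβ2 : β*(dist B C^2 + dist C A^2 + dist A B^2) = dist C A^2 := by
    linear_combination hz2 + hz3 + dist C A^2 * hsum
  have hγ2 : γ*(dist B C^2 + dist C A^2 + dist A B^2) = dist A B^2 := by
    linear_combination hz1 - hz3 + dist A B^2 * hsum
  have hαv : α = dist B C^2 / (dist B C^2 + dist C A^2 + dist A B^2) := by
    rw [eq_div_iff hSpos.ne']; exact hα2
  have hβv : β = dist C A^2 / (dist B C^2 + dist C A^2 + dist A B^2) := by
    rw [eq_div_iff hSpos.ne']; exact hβ2
  have hγv : γ = dist A B^2 / (dist B C^2 + dist C A^2 + dist A B^2) := by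
    rw [eq_div_iff hSpos.ne']; exact hγ2
  rw [hP3, hαv, hβv, hγv, lemoinePoint]
end
end

section
/- If P is an interior point of triangle ABC such that P is the Lemoine point of triangle A'B'C' (where A', B', C' are the second intersections of AP, BP, CP with the circumcircle), then P is the Lemoine point of triangle ABC. -/
set_option maxHeartbeats 1600000
set_option linter.unnecessarySeqFocus false


open EuclideanGeometry RealInnerProductSpace

noncomputable section

lemma chord_param (ω : EuclideanGeometry.Sphere Pt) (P X X' : Pt)
    (hX : X ∈ ω) (hX' : X' ∈ ω) (hne : X' ≠ X) (hXP : X ≠ P)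
    (hcol : Collinear ℝ ({X, P, X'} : Set Pt)) :
    X' - P = ((dist P ω.center ^ 2 - ω.radius ^ 2) / dist P X ^ 2) • (X - P) := by
  obtain ⟨v, hv⟩ := (collinear_iff_of_mem (show P ∈ ({X, P, X'} : Set Pt) by simp)).mp hcol
  obtain ⟨r1, h1⟩ := hv X (by simp)
  obtain ⟨r2, h2⟩ := hv X' (by simp)
  have hr1 : r1 ≠ 0 := by
    rintro rfl
    exact hXP (by simpa using h1)
  have hd1 : X - P = r1 • v := by rw [h1]; simp [vadd_eq_add]
  have hX'P : X' - P = (r2 / r1) • (X - P) := by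
    rw [hd1, smul_smul, div_mul_cancel₀ _ hr1, h2]; simp [vadd_eq_add]
  set t := r2 / r1 with htdef
  have hdist : dist P X ^ 2 = ‖X - P‖ ^ 2 := by rw [dist_comm, dist_eq_norm]
  have hd : ‖X - P‖ ^ 2 ≠ 0 := by
    apply pow_ne_zero
    simpa [sub_ne_zero] using hXP
  have hO1 : ‖X - ω.center‖ ^ 2 = ω.radius ^ 2 := by
    rw [← dist_eq_norm, mem_sphere.mp hX]
  have hO2 : ‖X' - ω.center‖ ^ 2 = ω.radius ^ 2 := by
    rw [← dist_eq_norm, mem_sphere.mp hX']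
  have e1 : ‖X - P‖ ^ 2 + 2 * ⟪X - P, P - ω.center⟫ + ‖P - ω.center‖ ^ 2 = ω.radius ^ 2 := by
    rw [← hO1, show X - ω.center = (X - P) + (P - ω.center) by abel, norm_add_sq_real]
  have e2 : t ^ 2 * ‖X - P‖ ^ 2 + 2 * t * ⟪X - P, P - ω.center⟫ + ‖P - ω.center‖ ^ 2
      = ω.radius ^ 2 := by
    rw [← hO2, show X' - ω.center = (X' - P) + (P - ω.center) by abel, hX'P,
      norm_add_sq_real, norm_smul, real_inner_smul_left]
    simp [mul_pow]
    ring
  have ht1 : t ≠ 1 := by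
    rintro h
    rw [h, one_smul] at hX'P
    exact hne (sub_left_inj.mp hX'P)
  have hte : (t - 1) * (t * ‖X - P‖ ^ 2 - (‖P - ω.center‖ ^ 2 - ω.radius ^ 2)) = 0 := by
    linear_combination e2 - t * e1
  have htv : t * ‖X - P‖ ^ 2 = ‖P - ω.center‖ ^ 2 - ω.radius ^ 2 := by
    rcases mul_eq_zero.mp hte with h | h
    · exact absurd (sub_eq_zero.mp h) ht1
    · linarith [sub_eq_zero.mp h]
  have : t = (dist P ω.center ^ 2 - ω.radius ^ 2) / dist P X ^ 2 := by
    rw [hdist, dist_eq_norm, eq_div_iff hd, htv]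
  rw [hX'P, this]

theorem stmt9    (A B C : Pt) (hABC : AffineIndependent ℝ ![A, B, C])
    (ω : EuclideanGeometry.Sphere Pt) (hr : 0 < ω.radius)
    (hA : A ∈ ω) (hB : B ∈ ω) (hC : C ∈ ω)
    (P : Pt) (hP : P ∈ interior (convexHull ℝ ({A, B, C} : Set Pt)))
    (A' : Pt) (hA'w : A' ∈ ω) (hA'ne : A' ≠ A) (hA'col : Collinear ℝ ({A, P, A'} : Set Pt))
    (B' : Pt) (hB'w : B' ∈ ω) (hB'ne : B' ≠ B) (hB'col : Collinear ℝ ({B, P, B'} : Set Pt))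
    (C' : Pt) (hC'w : C' ∈ ω) (hC'ne : C' ≠ C) (hC'col : Collinear ℝ ({C, P, C'} : Set Pt))
    (hPl : P = lemoinePoint A' B' C') : P = lemoinePoint A B C := by
  -- P is strictly inside the circle
  have hhull : convexHull ℝ ({A, B, C} : Set Pt) ⊆ Metric.closedBall ω.center ω.radius := by
    apply convexHull_min _ (convex_closedBall _ _)
    rintro x hx
    rcases hx with rfl | rfl | rfl <;>
      simp_all [Metric.mem_closedBall, mem_sphere.mp hA, mem_sphere.mp hB, mem_sphere.mp hC,
        le_of_eq]
  have hPball : dist P ω.center < ω.radius := by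
    have := interior_mono hhull hP
    rw [interior_closedBall _ hr.ne'] at this
    exact Metric.mem_ball.mp this
  -- key quantities
  set p : ℝ := dist P ω.center ^ 2 - ω.radius ^ 2 with hpdef
  have hp : p < 0 := by
    have h0 : (0:ℝ) ≤ dist P ω.center := dist_nonneg
    nlinarith
  have hpne : p ≠ 0 := hp.ne
  have hPX : ∀ X : Pt, X ∈ ω → X ≠ P := by
    rintro X hX rfl
    exact absurd (mem_sphere.mp hX) (ne_of_lt hPball)
  have hpaA : dist P A ^ 2 ≠ 0 := pow_ne_zero _ (dist_ne_zero.mpr (fun h => hPX A hA h.symm))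
  have hpaB : dist P B ^ 2 ≠ 0 := pow_ne_zero _ (dist_ne_zero.mpr (fun h => hPX B hB h.symm))
  have hpaC : dist P C ^ 2 ≠ 0 := pow_ne_zero _ (dist_ne_zero.mpr (fun h => hPX C hC h.symm))
  have hpaA' : (0:ℝ) < dist P A ^ 2 := lt_of_le_of_ne (by positivity) (Ne.symm hpaA)
  have hpaB' : (0:ℝ) < dist P B ^ 2 := lt_of_le_of_ne (by positivity) (Ne.symm hpaB)
  have hpaC' : (0:ℝ) < dist P C ^ 2 := lt_of_le_of_ne (by positivity) (Ne.symm hpaC)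
  -- chord parametrizations
  have eA := chord_param ω P A A' hA hA'w hA'ne (hPX A hA) hA'col
  have eB := chord_param ω P B B' hB hB'w hB'ne (hPX B hB) hB'col
  have eC := chord_param ω P C C' hC hC'w hC'ne (hPX C hC) hC'col
  rw [← hpdef] at eA eB eC
  -- chord length formulas
  have hnorm : ∀ X : Pt, ‖X - P‖ ^ 2 = dist P X ^ 2 := fun X => by
    rw [dist_comm, dist_eq_norm]
  have hlen : ∀ X Y X' Y' : Pt,
      X' - P = (p / dist P X ^ 2) • (X - P) → Y' - P = (p / dist P Y ^ 2) • (Y - P) →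
      dist P X ^ 2 ≠ 0 → dist P Y ^ 2 ≠ 0 →
      dist X' Y' ^ 2 = p ^ 2 * dist X Y ^ 2 / (dist P X ^ 2 * dist P Y ^ 2) := by
    intro X Y X' Y' hX' hY' hX0 hY0
    have hsub : X' - Y' = (p / dist P X ^ 2) • (X - P) - (p / dist P Y ^ 2) • (Y - P) := by
      rw [show X' - Y' = (X' - P) - (Y' - P) by abel, hX', hY']
    have hXY : dist X Y ^ 2 = dist P X ^ 2 - 2 * ⟪X - P, Y - P⟫ + dist P Y ^ 2 := by
      rw [dist_eq_norm, show X - Y = (X - P) - (Y - P) by abel, norm_sub_sq_real,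
        hnorm X, hnorm Y]
    rw [dist_eq_norm, hsub, norm_sub_sq_real, norm_smul, norm_smul,
      real_inner_smul_left, real_inner_smul_right, hXY, mul_pow, mul_pow,
      Real.norm_eq_abs, Real.norm_eq_abs, sq_abs, sq_abs, hnorm X, hnorm Y]
    have hx1 : dist P X ≠ 0 := fun h => hX0 (by simp [h])
    have hy1 : dist P Y ≠ 0 := fun h => hY0 (by simp [h])
    field_simp
    ring
  have ha' := hlen B C B' C' eB eC hpaB hpaC
  have hb' := hlen C A C' A' eC eA hpaC hpaA
  have hc' := hlen A B A' B' eA eB hpaA hpaB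
  -- side lengths nonzero
  have hBC : B ≠ C := by
    have := hABC.injective.ne (show (1 : Fin 3) ≠ 2 by decide)
    simpa using this
  have hCA : C ≠ A := by
    have := hABC.injective.ne (show (2 : Fin 3) ≠ 0 by decide)
    simpa using this
  have hAB : A ≠ B := by
    have := hABC.injective.ne (show (0 : Fin 3) ≠ 1 by decide)
    simpa using this
  have ha2 : (0:ℝ) < dist B C ^ 2 := pow_pos (dist_pos.mpr hBC) 2
  have hb2 : (0:ℝ) < dist C A ^ 2 := pow_pos (dist_pos.mpr hCA) 2
  have hc2 : (0:ℝ) < dist A B ^ 2 := pow_pos (dist_pos.mpr hAB) 2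
  have hp2 : (0:ℝ) < p ^ 2 := by nlinarith
  have hS : (0:ℝ) < p ^ 2 * dist B C ^ 2 / (dist P B ^ 2 * dist P C ^ 2)
      + p ^ 2 * dist C A ^ 2 / (dist P C ^ 2 * dist P A ^ 2)
      + p ^ 2 * dist A B ^ 2 / (dist P A ^ 2 * dist P B ^ 2) := by
    have t1 := div_pos (mul_pos hp2 ha2) (mul_pos hpaB' hpaC')
    have t2 := div_pos (mul_pos hp2 hb2) (mul_pos hpaC' hpaA')
    have t3 := div_pos (mul_pos hp2 hc2) (mul_pos hpaA' hpaB')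
    linarith
  have hmain0 : lemoinePoint A' B' C' - P =
      (p ^ 3 / (dist P A ^ 2 * dist P B ^ 2 * dist P C ^ 2 *
        (p ^ 2 * dist B C ^ 2 / (dist P B ^ 2 * dist P C ^ 2)
          + p ^ 2 * dist C A ^ 2 / (dist P C ^ 2 * dist P A ^ 2)
          + p ^ 2 * dist A B ^ 2 / (dist P A ^ 2 * dist P B ^ 2)))) •
      (dist B C ^ 2 • (A - P) + dist C A ^ 2 • (B - P) + dist A B ^ 2 • (C - P)) := by
    rw [lemoinePoint, ha', hb', hc', sub_eq_iff_eq_add.mp eA, sub_eq_iff_eq_add.mp eB,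
      sub_eq_iff_eq_add.mp eC]
    set pa := dist P A ^ 2
    set pb := dist P B ^ 2
    set pc := dist P C ^ 2
    set a2 := dist B C ^ 2
    set b2 := dist C A ^ 2
    set c2 := dist A B ^ 2
    match_scalars <;> field_simp <;> ring
  have h0 : lemoinePoint A' B' C' - P = 0 := by rw [← hPl, sub_self]
  rw [hmain0] at h0
  have hcoef : p ^ 3 / (dist P A ^ 2 * dist P B ^ 2 * dist P C ^ 2 *
      (p ^ 2 * dist B C ^ 2 / (dist P B ^ 2 * dist P C ^ 2)
        + p ^ 2 * dist C A ^ 2 / (dist P C ^ 2 * dist P A ^ 2)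
        + p ^ 2 * dist A B ^ 2 / (dist P A ^ 2 * dist P B ^ 2))) ≠ 0 := by
    apply div_ne_zero (pow_ne_zero _ hpne)
    exact mul_ne_zero (mul_ne_zero (mul_ne_zero hpaA hpaB) hpaC) hS.ne'
  have hmain : dist B C ^ 2 • (A - P) + dist C A ^ 2 • (B - P) + dist A B ^ 2 • (C - P)
      = (0 : Pt) := by
    rcases smul_eq_zero.mp h0 with h | h
    · exact absurd h hcoef
    · exact h
  have hsum : dist B C ^ 2 + dist C A ^ 2 + dist A B ^ 2 ≠ 0 := by positivity
  have key2 : ((dist B C) ^ 2 / ((dist B C) ^ 2 + (dist C A) ^ 2 + (dist A B) ^ 2)) • A +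
      ((dist C A) ^ 2 / ((dist B C) ^ 2 + (dist C A) ^ 2 + (dist A B) ^ 2)) • B +
      ((dist A B) ^ 2 / ((dist B C) ^ 2 + (dist C A) ^ 2 + (dist A B) ^ 2)) • C - P =
      (1 / ((dist B C) ^ 2 + (dist C A) ^ 2 + (dist A B) ^ 2)) •
      (dist B C ^ 2 • (A - P) + dist C A ^ 2 • (B - P) + dist A B ^ 2 • (C - P)) := by
    match_scalars <;> field_simp <;> ring
  rw [hmain, smul_zero, sub_eq_zero] at key2
  rw [lemoinePoint]
  exact key2.symm
end
end

section
/- (First Lemoine Circle) The six points obtained by intersecting the lines through L parallel to BC, CA, AB with the other two side lines (each parallel line meets two sides, giving six points in total) lie on a common circle whose center is the midpoint of segment LO. -/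
open EuclideanGeometry RealInnerProductSpace

noncomputable section

private lemma norm_comb' (x y z : Pt) (p q r : ℝ) :
    ‖p • x + q • y + r • z‖ ^ 2 =
      p^2 * ⟪x, x⟫ + q^2 * ⟪y, y⟫ + r^2 * ⟪z, z⟫
      + 2*(p*q) * ⟪x, y⟫ + 2*(p*r) * ⟪x, z⟫ + 2*(q*r) * ⟪y, z⟫ := by
  rw [← real_inner_self_eq_norm_sq]
  simp only [inner_add_left, inner_add_right, real_inner_smul_left, real_inner_smul_right,
    real_inner_comm x y, real_inner_comm x z, real_inner_comm y z]
  ring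

private lemma pin' {X Y L P D : Pt} {u s : ℝ}
    (hind : ∀ r t : ℝ, r • (Y - X) = t • D → r = 0)
    (hLX : L - X = u • (Y - X) + s • D)
    (hP : P ∈ affineSpan ℝ ({X, Y} : Set Pt))
    (ht : ∃ t : ℝ, P - L = t • D) : P = X + u • (Y - X) := by
  obtain ⟨t, ht⟩ := ht
  have h1 : P -ᵥ X ∈ (affineSpan ℝ ({X, Y} : Set Pt)).direction :=
    AffineSubspace.vsub_mem_direction hP (mem_affineSpan ℝ (Set.mem_insert _ _))
  rw [direction_affineSpan, mem_vectorSpan_pair] at h1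
  obtain ⟨r, hr⟩ := h1
  have hr2 : r • (X - Y) = P - X := by simpa using hr
  have hr' : P - X = (-r) • (Y - X) := by
    linear_combination (norm := module) -hr2
  have key : (-r - u) • (Y - X) = (t + s) • D := by
    linear_combination (norm := module) ht + hLX - hr'
  have := hind _ _ key
  have hru : (-r : ℝ) = u := by linarith
  rw [hru] at hr'
  linear_combination (norm := module) hr'

private lemma dist_helper {x y z : Pt} {R a b c σ : ℝ} (hσ : σ ≠ 0)
    (hx : ⟪x, x⟫ = R^2) (hy : ⟪y, y⟫ = R^2) (hz : ⟪z, z⟫ = R^2)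
    (hxy : ⟪x, y⟫ = R^2 - c^2/2) (hxz : ⟪x, z⟫ = R^2 - b^2/2) (hyz : ⟪y, z⟫ = R^2 - a^2/2)
    (p q r : ℝ) (hsum : p + q + r = 1)
    (hprod : (p*q*c^2 + p*r*b^2 + q*r*a^2) * σ^2 = -(a^2*b^2*c^2)) :
    ‖(2:ℝ)⁻¹ • (p • x + q • y + r • z)‖ = Real.sqrt (R^2 + (a*b*c/σ)^2) / 2 := by
  have h2 : ‖p • x + q • y + r • z‖^2 = R^2 + (a*b*c/σ)^2 := by
    rw [norm_comb', hx, hy, hz, hxy, hxz, hyz]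
    field_simp
    linear_combination (R^2*σ^2*(p+q+r+1)) * hsum - hprod
  have hw : ‖p • x + q • y + r • z‖ = Real.sqrt (R^2 + (a*b*c/σ)^2) := by
    rw [← h2, Real.sqrt_sq (norm_nonneg _)]
  rw [norm_smul, hw]
  simp
  ring
set_option maxHeartbeats 2000000 in
theorem stmt10    (A B C : Pt) (hABC : AffineIndependent ℝ ![A, B, C])
    (ω : EuclideanGeometry.Sphere Pt) (hr : 0 < ω.radius)
    (hA : A ∈ ω) (hB : B ∈ ω) (hC : C ∈ ω)
    (L : Pt) (hL : L = lemoinePoint A B C)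
    (Pa₁ Pa₂ Pb₁ Pb₂ Pc₁ Pc₂ : Pt)
    (hPa₁l : Pa₁ ∈ affineSpan ℝ ({C, A} : Set Pt)) (hPa₁p : (∃ t : ℝ, Pa₁ - L = t • (C - B)))
    (hPa₂l : Pa₂ ∈ affineSpan ℝ ({A, B} : Set Pt)) (hPa₂p : (∃ t : ℝ, Pa₂ - L = t • (C - B)))
    (hPb₁l : Pb₁ ∈ affineSpan ℝ ({A, B} : Set Pt)) (hPb₁p : (∃ t : ℝ, Pb₁ - L = t • (A - C)))
    (hPb₂l : Pb₂ ∈ affineSpan ℝ ({B, C} : Set Pt)) (hPb₂p : (∃ t : ℝ, Pb₂ - L = t • (A - C)))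
    (hPc₁l : Pc₁ ∈ affineSpan ℝ ({B, C} : Set Pt)) (hPc₁p : (∃ t : ℝ, Pc₁ - L = t • (B - A)))
    (hPc₂l : Pc₂ ∈ affineSpan ℝ ({C, A} : Set Pt)) (hPc₂p : (∃ t : ℝ, Pc₂ - L = t • (B - A))) :
    ∃ s : EuclideanGeometry.Sphere Pt,
      (Pa₁ ∈ s ∧ Pa₂ ∈ s ∧ Pb₁ ∈ s ∧ Pb₂ ∈ s ∧ Pc₁ ∈ s ∧ Pc₂ ∈ s) ∧
      s.center = midpoint ℝ L ω.center := by
  -- basic abbreviations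
  set O : Pt := ω.center with hO
  set R : ℝ := ω.radius with hR
  set a : ℝ := dist B C with ha
  set b : ℝ := dist C A with hb
  set c : ℝ := dist A B with hc
  set σ : ℝ := a^2 + b^2 + c^2 with hσdef
  -- distinctness
  have hAB : A ≠ B := hABC.injective.ne (by decide : (0 : Fin 3) ≠ 1)
  have hBC : B ≠ C := hABC.injective.ne (by decide : (1 : Fin 3) ≠ 2)
  have hCA : C ≠ A := hABC.injective.ne (by decide : (2 : Fin 3) ≠ 0)
  have hapos : 0 < a := dist_pos.2 hBC
  have hbpos : 0 < b := dist_pos.2 hCA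
  have hcpos : 0 < c := dist_pos.2 hAB
  have hσpos : 0 < σ := by positivity
  have hσ : σ ≠ 0 := ne_of_gt hσpos
  -- Lemoine point explicitly
  have hL' : L = (a^2/σ) • A + (b^2/σ) • B + (c^2/σ) • C := by
    rw [hL]; simp only [lemoinePoint]; rfl
  -- linear independence of B - A, C - A
  have hncol : ¬ Collinear ℝ ({A, B, C} : Set Pt) :=
    (affineIndependent_iff_not_collinear_set).1 hABC
  have hli : ∀ p q : ℝ, p • (B - A) + q • (C - A) = 0 → p = 0 ∧ q = 0 := by
    intro p q h
    by_cases hp : p = 0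
    · subst hp
      have : q • (C - A) = 0 := by simpa using h
      rcases smul_eq_zero.1 this with h' | h'
      · exact ⟨rfl, h'⟩
      · exact absurd (sub_eq_zero.1 h') hCA
    · exfalso
      have h2 : B - A = (-q/p) • (C - A) := by
        have h3 : p • (B - A) = (-q) • (C - A) := by
          linear_combination (norm := module) h
        have := congrArg (fun v => p⁻¹ • v) h3
        simpa [smul_smul, inv_mul_cancel₀ hp, div_eq_inv_mul, neg_mul, mul_comm] using this
      have hBmem : B ∈ affineSpan ℝ ({A, C} : Set Pt) := by
        have : ((-q/p) • (C -ᵥ A) +ᵥ A : Pt) ∈ affineSpan ℝ ({A, C} : Set Pt) :=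
          smul_vsub_vadd_mem_affineSpan_pair _ _ _
        have hBe : ((-q/p) • (C -ᵥ A) +ᵥ A : Pt) = B := by
          simp only [vsub_eq_sub, vadd_eq_add]
          linear_combination (norm := module) -h2
        rwa [hBe] at this
      have hcol : Collinear ℝ ({B, A, C} : Set Pt) :=
        collinear_insert_of_mem_affineSpan_pair hBmem
      rw [Set.insert_comm] at hcol
      exact hncol hcol
  -- pin down the six points
  have ePa₁ : Pa₁ = C + (a^2/σ) • (A - C) := by
    refine pin' (s := -(b^2/σ)) ?_ ?_ hPa₁l hPa₁p
    · intro r t h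
      have := hli t (-r - t) (by linear_combination (norm := module) h)
      linarith [this.1, this.2]
    · rw [hL']; match_scalars <;> (field_simp; try ring)
  have ePa₂ : Pa₂ = A + (b^2/σ + c^2/σ) • (B - A) := by
    refine pin' (s := c^2/σ) ?_ ?_ hPa₂l hPa₂p
    · intro r t h
      have := hli (r + t) (-t) (by linear_combination (norm := module) h)
      linarith [this.1, this.2]
    · rw [hL']; match_scalars <;> (field_simp; try ring)
  have ePb₁ : Pb₁ = A + (b^2/σ) • (B - A) := by
    refine pin' (s := -(c^2/σ)) ?_ ?_ hPb₁l hPb₁p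
    · intro r t h
      have := hli r t (by linear_combination (norm := module) h)
      exact this.1
    · rw [hL']; match_scalars <;> (field_simp; try ring)
  have ePb₂ : Pb₂ = B + (c^2/σ + a^2/σ) • (C - B) := by
    refine pin' (s := a^2/σ) ?_ ?_ hPb₂l hPb₂p
    · intro r t h
      have := hli (-r) (r + t) (by linear_combination (norm := module) h)
      linarith [this.1]
    · rw [hL']; match_scalars <;> (field_simp; try ring)
  have ePc₁ : Pc₁ = B + (c^2/σ) • (C - B) := by
    refine pin' (s := -(a^2/σ)) ?_ ?_ hPc₁l hPc₁p
    · intro r t h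
      have := hli (-r - t) r (by linear_combination (norm := module) h)
      exact this.2
    · rw [hL']; match_scalars <;> (field_simp; try ring)
  have ePc₂ : Pc₂ = C + (a^2/σ + b^2/σ) • (A - C) := by
    refine pin' (s := b^2/σ) ?_ ?_ hPc₂l hPc₂p
    · intro r t h
      have := hli (-t) (-r) (by linear_combination (norm := module) h)
      linarith [this.2]
    · rw [hL']; match_scalars <;> (field_simp; try ring)
  -- inner product facts
  set x : Pt := A - O with hx0
  set y : Pt := B - O with hy0
  set z : Pt := C - O with hz0
  have hdA : dist A O = R := EuclideanGeometry.mem_sphere.1 hA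
  have hdB : dist B O = R := EuclideanGeometry.mem_sphere.1 hB
  have hdC : dist C O = R := EuclideanGeometry.mem_sphere.1 hC
  have hnx : ‖x‖^2 = R^2 := by rw [hx0, ← dist_eq_norm, hdA]
  have hny : ‖y‖^2 = R^2 := by rw [hy0, ← dist_eq_norm, hdB]
  have hnz : ‖z‖^2 = R^2 := by rw [hz0, ← dist_eq_norm, hdC]
  have hx : ⟪x, x⟫ = R^2 := by rw [real_inner_self_eq_norm_sq, hnx]
  have hy : ⟪y, y⟫ = R^2 := by rw [real_inner_self_eq_norm_sq, hny]
  have hz : ⟪z, z⟫ = R^2 := by rw [real_inner_self_eq_norm_sq, hnz]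
  have hxmy : x - y = A - B := by rw [hx0, hy0]; abel
  have hxmz : x - z = A - C := by rw [hx0, hz0]; abel
  have hymz : y - z = B - C := by rw [hy0, hz0]; abel
  have hxy : ⟪x, y⟫ = R^2 - c^2/2 := by
    have h1 : ‖x - y‖^2 = c^2 := by rw [hxmy, ← dist_eq_norm, hc]
    rw [norm_sub_sq_real, hnx, hny] at h1
    linarith
  have hxz : ⟪x, z⟫ = R^2 - b^2/2 := by
    have h1 : ‖x - z‖^2 = b^2 := by
      rw [hxmz, ← dist_eq_norm, ← dist_comm C A, hb]
    rw [norm_sub_sq_real, hnx, hnz] at h1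
    linarith
  have hyz : ⟪y, z⟫ = R^2 - a^2/2 := by
    have h1 : ‖y - z‖^2 = a^2 := by rw [hymz, ← dist_eq_norm, ha]
    rw [norm_sub_sq_real, hny, hnz] at h1
    linarith
  -- the circle
  set M : Pt := midpoint ℝ L O with hM
  set ρ : ℝ := Real.sqrt (R^2 + (a*b*c/σ)^2) / 2 with hρ
  refine ⟨⟨M, ρ⟩, ⟨?_, ?_, ?_, ?_, ?_, ?_⟩, rfl⟩ <;>
    rw [EuclideanGeometry.mem_sphere]
  · -- Pa₁
    have hdiff : Pa₁ - M = (2:ℝ)⁻¹ • ((a^2/σ) • x + (-(b^2/σ)) • y + (2*(b^2/σ) + c^2/σ) • z) := by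
      rw [ePa₁, hM, midpoint_eq_smul_add, invOf_eq_inv, hL', hx0, hy0, hz0]
      match_scalars <;> (field_simp; try ring)
    show dist Pa₁ M = ρ
    rw [dist_eq_norm, hdiff]
    exact dist_helper hσ hx hy hz hxy hxz hyz _ _ _ (by field_simp; try ring) (by field_simp; try ring)
  · -- Pa₂
    have hdiff : Pa₂ - M = (2:ℝ)⁻¹ • ((a^2/σ) • x + (b^2/σ + 2*(c^2/σ)) • y + (-(c^2/σ)) • z) := by
      rw [ePa₂, hM, midpoint_eq_smul_add, invOf_eq_inv, hL', hx0, hy0, hz0]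
      match_scalars <;> (field_simp; try ring)
    show dist Pa₂ M = ρ
    rw [dist_eq_norm, hdiff]
    exact dist_helper hσ hx hy hz hxy hxz hyz _ _ _ (by field_simp; try ring) (by field_simp; try ring)
  · -- Pb₁
    have hdiff : Pb₁ - M = (2:ℝ)⁻¹ • ((a^2/σ + 2*(c^2/σ)) • x + (b^2/σ) • y + (-(c^2/σ)) • z) := by
      rw [ePb₁, hM, midpoint_eq_smul_add, invOf_eq_inv, hL', hx0, hy0, hz0]
      match_scalars <;> (field_simp; try ring)
    show dist Pb₁ M = ρ
    rw [dist_eq_norm, hdiff]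
    exact dist_helper hσ hx hy hz hxy hxz hyz _ _ _ (by field_simp; try ring) (by field_simp; try ring)
  · -- Pb₂
    have hdiff : Pb₂ - M = (2:ℝ)⁻¹ • ((-(a^2/σ)) • x + (b^2/σ) • y + (2*(a^2/σ) + c^2/σ) • z) := by
      rw [ePb₂, hM, midpoint_eq_smul_add, invOf_eq_inv, hL', hx0, hy0, hz0]
      match_scalars <;> (field_simp; try ring)
    show dist Pb₂ M = ρ
    rw [dist_eq_norm, hdiff]
    exact dist_helper hσ hx hy hz hxy hxz hyz _ _ _ (by field_simp; try ring) (by field_simp; try ring)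
  · -- Pc₁
    have hdiff : Pc₁ - M = (2:ℝ)⁻¹ • ((-(a^2/σ)) • x + (2*(a^2/σ) + b^2/σ) • y + (c^2/σ) • z) := by
      rw [ePc₁, hM, midpoint_eq_smul_add, invOf_eq_inv, hL', hx0, hy0, hz0]
      match_scalars <;> (field_simp; try ring)
    show dist Pc₁ M = ρ
    rw [dist_eq_norm, hdiff]
    exact dist_helper hσ hx hy hz hxy hxz hyz _ _ _ (by field_simp; try ring) (by field_simp; try ring)
  · -- Pc₂
    have hdiff : Pc₂ - M = (2:ℝ)⁻¹ • ((a^2/σ + 2*(b^2/σ)) • x + (-(b^2/σ)) • y + (c^2/σ) • z) := by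
      rw [ePc₂, hM, midpoint_eq_smul_add, invOf_eq_inv, hL', hx0, hy0, hz0]
      match_scalars <;> (field_simp; try ring)
    show dist Pc₂ M = ρ
    rw [dist_eq_norm, hdiff]
    exact dist_helper hσ hx hy hz hxy hxz hyz _ _ _ (by field_simp; try ring) (by field_simp; try ring)
end
end
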